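/- arXiv:0706.0725 — 10 statements merged into one kernel-verified Lean document; each statement's English description precedes it below -/
import Mathlib

section
/- If f(x) ∈ ℤ[[x]] has constant coefficient f₀ ≠ 0 such that f₀ is neither a unit of ℤ nor of the form ±pⁿ for a prime p and n ≥ 1 (equivalently, f₀ = ab with a, b coprime non-unit integers), then f(x) is reducible in ℤ[[x]]. -/
def AB (u v c d : ℤ) (F : ℕ → ℤ) : ℕ → ℤ × ℤ
  | 0 => (c, d)
  | (m+1) =>
    let r := F (m+1) - ∑ i ∈ (Finset.range m).attach,
      (AB u v c d F (i.1+1)).1 * (AB u v c d F (m - i.1)).2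
    (v * r, u * r)
decreasing_by
  · have := i.2; simp only [Finset.mem_range] at this; omega
  · have := i.2; simp only [Finset.mem_range] at this; omega

lemma AB_conv (u v c d : ℤ) (F : ℕ → ℤ) (huv : u * c + v * d = 1) (hF0 : F 0 = c * d)
    (n : ℕ) :
    ∑ i ∈ Finset.range (n+1), (AB u v c d F i).1 * (AB u v c d F (n - i)).2 = F n := by
  cases n with
  | zero => simp [AB, hF0]
  | succ m =>
    set r := F (m+1) - ∑ i ∈ (Finset.range m).attach,
      (AB u v c d F (i.1+1)).1 * (AB u v c d F (m - i.1)).2 with hr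
    have hA : AB u v c d F (m+1) = (v * r, u * r) := by rw [AB]
    rw [Finset.sum_range_succ, Finset.sum_range_succ']
    have h1 : ∀ i ∈ Finset.range m,
        (AB u v c d F (i+1)).1 * (AB u v c d F (m+1-(i+1))).2
        = (AB u v c d F (i+1)).1 * (AB u v c d F (m-i)).2 := by
      intro i hi
      have : m + 1 - (i+1) = m - i := by omega
      rw [this]
    rw [Finset.sum_congr rfl h1]
    have h2 : ∑ i ∈ (Finset.range m).attach,
        (AB u v c d F (i.1+1)).1 * (AB u v c d F (m - i.1)).2
        = ∑ i ∈ Finset.range m, (AB u v c d F (i+1)).1 * (AB u v c d F (m-i)).2 :=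
      Finset.sum_attach (Finset.range m)
        (fun i => (AB u v c d F (i+1)).1 * (AB u v c d F (m-i)).2)
    have hA0 : AB u v c d F 0 = (c, d) := by rw [AB]
    rw [hA, hA0]
    simp only
    rw [show m + 1 - 0 = m + 1 from rfl, hA]
    simp only [Nat.sub_self]
    rw [hA0]
    simp only
    have hrr : r = F (m+1) - ∑ i ∈ Finset.range m,
        (AB u v c d F (i+1)).1 * (AB u v c d F (m-i)).2 := by rw [hr, h2]
    linear_combination hrr + r * huv

theorem stmt_2 (f : PowerSeries ℤ)
    (h0 : PowerSeries.constantCoeff f ≠ 0)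
    (h1 : ¬ IsUnit (PowerSeries.constantCoeff f))
    (h2 : ∀ (p : ℤ) (n : ℕ), Prime p → 1 ≤ n →
      PowerSeries.constantCoeff f ≠ p ^ n ∧ PowerSeries.constantCoeff f ≠ -(p ^ n)) :
    ∃ a b : PowerSeries ℤ, ¬ IsUnit a ∧ ¬ IsUnit b ∧ f = a * b := by
  set z := PowerSeries.constantCoeff f with hz
  set m := z.natAbs with hm
  have hm0 : m ≠ 0 := by simpa [hm] using h0
  have hm1 : m ≠ 1 := by
    intro h; exact h1 (Int.isUnit_iff_natAbs_eq.mpr h)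
  set p := m.minFac with hpdef
  have hp : p.Prime := Nat.minFac_prime hm1
  set k := m.factorization p with hk
  have hk1 : 1 ≤ k := hp.factorization_pos_of_dvd hm0 (Nat.minFac_dvd m)
  have hsplit : p ^ k * (m / p ^ k) = m := Nat.ordProj_mul_ordCompl_eq_self m p
  have hcop : Nat.Coprime (p ^ k) (m / p ^ k) :=
    (Nat.coprime_ordCompl hp hm0).pow_left k
  set c : ℤ := z.sign * (p:ℤ) ^ k with hc
  set d : ℤ := ((m / p ^ k : ℕ) : ℤ) with hd
  have hsign : z.sign = 1 ∨ z.sign = -1 := by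
    rcases lt_or_gt_of_ne h0 with h | h
    · right; exact Int.sign_eq_neg_one_iff_neg.mpr h
    · left; exact Int.sign_eq_one_iff_pos.mpr h
  have hcd : c * d = z := by
    have : (p:ℤ) ^ k * d = (m : ℤ) := by
      rw [hd, ← Nat.cast_pow, ← Nat.cast_mul, hsplit]
    rw [hc, mul_assoc, this, hm, Int.sign_mul_natAbs]
  have hcnat : c.natAbs = p ^ k := by
    rw [hc, Int.natAbs_mul, Int.natAbs_sign_of_ne_zero h0, one_mul,
      Int.natAbs_pow, Int.natAbs_natCast]
  have hdnat : d.natAbs = m / p ^ k := by rw [hd, Int.natAbs_natCast]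
  have hcdcop : IsCoprime c d := by
    rw [Int.isCoprime_iff_gcd_eq_one, Int.gcd, hcnat, hdnat]
    exact hcop
  obtain ⟨u, v, huv⟩ := hcdcop
  set F : ℕ → ℤ := fun n => PowerSeries.coeff n f with hF
  have hF0 : F 0 = c * d := by
    rw [hF]; simp only [PowerSeries.coeff_zero_eq_constantCoeff]
    rw [← hz, hcd]
  refine ⟨PowerSeries.mk fun n => (AB u v c d F n).1,
    PowerSeries.mk fun n => (AB u v c d F n).2, ?_, ?_, ?_⟩
  · intro hu
    have := hu.map (PowerSeries.constantCoeff)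
    rw [show PowerSeries.constantCoeff (PowerSeries.mk fun n => (AB u v c d F n).1)
        = (AB u v c d F 0).1 by
      rw [← PowerSeries.coeff_zero_eq_constantCoeff_apply, PowerSeries.coeff_mk]] at this
    rw [show AB u v c d F 0 = (c, d) from by rw [AB]] at this
    have hcu := Int.isUnit_iff_natAbs_eq.mp this
    rw [hcnat] at hcu
    have h2le : 1 < p ^ k := Nat.one_lt_pow (by omega) hp.one_lt
    omega
  · intro hu
    have := hu.map (PowerSeries.constantCoeff)
    rw [show PowerSeries.constantCoeff (PowerSeries.mk fun n => (AB u v c d F n).2)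
        = (AB u v c d F 0).2 by
      rw [← PowerSeries.coeff_zero_eq_constantCoeff_apply, PowerSeries.coeff_mk]] at this
    rw [show AB u v c d F 0 = (c, d) from by rw [AB]] at this
    have hdu := Int.isUnit_iff_natAbs_eq.mp this
    rw [hdnat] at hdu
    have hmeq : m = p ^ k := by rw [← hsplit, hdu, mul_one]
    have hna : (z.natAbs : ℤ) = (p:ℤ) ^ k := by
      rw [← hm, hmeq]; push_cast; ring
    have hzval : z = z.sign * (p:ℤ) ^ k := by
      nth_rewrite 1 [← Int.sign_mul_natAbs z]
      rw [hna]
    have hip : Prime (p : ℤ) := Nat.prime_iff_prime_int.mp hp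
    rcases hsign with hs | hs
    · exact (h2 (p:ℤ) k hip hk1).1 (by rw [hzval, hs, one_mul])
    · exact (h2 (p:ℤ) k hip hk1).2 (by rw [hzval, hs]; ring)
  · ext n
    rw [PowerSeries.coeff_mul, Finset.Nat.sum_antidiagonal_eq_sum_range_succ_mk]
    simp only [PowerSeries.coeff_mk]
    exact (AB_conv u v c d F huv hF0 n).symm
end

section
/- Let p be a prime and a(x) ∈ ℤ[[x]] with constant coefficient a₀ = p and gcd(p, a₁) = 1, where a₁ is the coefficient of x. Then for every t ≥ 2 there exists a unit u(x) ∈ ℤ[[x]] such that q(x) = u(x)·a(x) satisfies: q₀ = p, q₁ ≡ a₁ (mod p), and the coefficients q₂ = q₃ = ⋯ = q_t = 0. -/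
/-!
Suppose `q ≡ p + c X (mod Xⁿ)` with `n ≥ 2` and `p, c` coprime, and let `r₀` be the coefficient
of `Xⁿ` in `q - (p + c X)`. As `p + c X` divides `pⁿ⁻¹ - (-c X)ⁿ⁻¹`, multiplying `q` by
`1 + β X w`, `w` the quotient, changes below `Xⁿ⁺¹` only the linear coefficient, by the multiple
`β pⁿ⁻¹` of `p`, and the coefficient of `Xⁿ`, by `-β (-c)ⁿ⁻¹`; multiplying by `1 + γ Xⁿ` changes
the latter by `γ p`. A Bézout relation for `p` and `(-c)ⁿ⁻¹` chooses `β, γ` cancelling `r₀`, and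
the multiplier has constant coefficient `1`, so it is a unit. Induct on `n`.
-/

open PowerSeries

namespace PowerSeries

variable {R : Type*} [CommRing R]

theorem coeff_eq_of_X_pow_dvd_sub {φ ψ : R⟦X⟧} {n m : ℕ} (h : X ^ n ∣ φ - ψ) (hm : m < n) :
    coeff m φ = coeff m ψ :=
  sub_eq_zero.mp (by rw [← map_sub]; exact X_pow_dvd_iff.mp h m hm)

theorem X_sq_dvd_sub_linear (φ : R⟦X⟧) :
    X ^ 2 ∣ φ - (C (coeff 0 φ) + C (coeff 1 φ) * X) := by
  refine X_pow_dvd_iff.mpr fun m hm => ?_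
  interval_cases m <;> simp

theorem exists_isUnit_mul_X_pow_succ_dvd {p c : R} (hpc : IsCoprime p c) {n : ℕ} (hn : 2 ≤ n)
    {q : R⟦X⟧} (hq : X ^ n ∣ q - (C p + C c * X)) :
    ∃ v : R⟦X⟧, IsUnit v ∧ ∃ c', p ∣ c - c' ∧ X ^ (n + 1) ∣ v * q - (C p + C c' * X) := by
  obtain ⟨m, rfl⟩ : ∃ m, n = m + 1 := ⟨n - 1, by omega⟩
  obtain ⟨r, hr⟩ := hq
  set r₀ := constantCoeff r
  obtain ⟨r', hr'⟩ : X ∣ r - C r₀ := X_dvd_iff.mpr (by simp [r₀])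
  obtain ⟨w, hw⟩ := sub_dvd_pow_sub_pow (C p) (-(C c * X)) m
  obtain ⟨γ, β, hbez⟩ := hpc.neg_right.pow_right (n := m)
  have hbezC : C γ * C p + C β * (-C c) ^ m = (1 : R⟦X⟧) := by
    simpa only [map_add, map_mul, map_pow, map_neg, map_one] using congrArg C hbez
  refine ⟨1 + C r₀ * C β * X * w - C r₀ * C γ * X ^ (m + 1), ?_, c + r₀ * β * p ^ m, ?_,
    r' + C r₀ * C β * w * r - C r₀ * C γ * C c - C r₀ * C γ * X ^ m * r, ?_⟩
  · simp [isUnit_iff_constantCoeff]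
  · rw [show c - (c + r₀ * β * p ^ m) = -(r₀ * β * p ^ m) by ring, dvd_neg]
    exact (dvd_pow_self p (by omega)).mul_left _
  · simp only [map_add, map_mul, map_pow]
    linear_combination (1 + C r₀ * C β * X * w - C r₀ * C γ * X ^ (m + 1)) * hr
      - C r₀ * C β * X * hw + X ^ (m + 1) * hr' - X ^ (m + 1) * C r₀ * hbezC

theorem exists_isUnit_mul_X_pow_dvd {p c : R} (hpc : IsCoprime p c) {q : R⟦X⟧}
    (hq : X ^ 2 ∣ q - (C p + C c * X)) {n : ℕ} (hn : 2 ≤ n) :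
    ∃ u : R⟦X⟧, IsUnit u ∧ ∃ c', p ∣ c - c' ∧ X ^ n ∣ u * q - (C p + C c' * X) := by
  induction n, hn using Nat.le_induction with
  | base => exact ⟨1, isUnit_one, c, by simp, by simpa using hq⟩
  | succ n hn ih =>
    obtain ⟨u, hu, c', ⟨k, hk⟩, hdvd⟩ := ih
    have hpc' : IsCoprime p c' := by
      simpa [show c' = c + p * -k by linear_combination -hk] using hpc.add_mul_left_right (-k)
    obtain ⟨v, hv, c'', hc'c'', hdvd'⟩ := exists_isUnit_mul_X_pow_succ_dvd hpc' hn hdvd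
    refine ⟨v * u, hv.mul hu, c'', ?_, by rwa [mul_assoc]⟩
    simpa using dvd_add ⟨k, hk⟩ hc'c''

end PowerSeries

theorem stmt_4_general (p : ℕ) (a : PowerSeries ℤ)
    (h0 : PowerSeries.coeff 0 a = (p : ℤ))
    (h1 : Int.gcd (p : ℤ) (PowerSeries.coeff 1 a) = 1)
    (t : ℕ) :
    ∃ u : PowerSeries ℤ, IsUnit u ∧
      PowerSeries.coeff 0 (u * a) = (p : ℤ) ∧
      PowerSeries.coeff 1 (u * a) ≡ PowerSeries.coeff 1 a [ZMOD (p : ℤ)] ∧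
      ∀ i, 2 ≤ i → i ≤ t → PowerSeries.coeff i (u * a) = 0 := by
  have hbase := X_sq_dvd_sub_linear a
  rw [h0] at hbase
  obtain ⟨u, hu, c, hc, hdvd⟩ :=
    exists_isUnit_mul_X_pow_dvd (Int.isCoprime_iff_gcd_eq_one.mpr h1) hbase (n := t + 2) (by omega)
  have hcoeff (m : ℕ) (hm : m < t + 2) :
      coeff m (u * a) = if m = 0 then (p : ℤ) else if m = 1 then c else 0 := by
    rw [coeff_eq_of_X_pow_dvd_sub hdvd hm, map_add, coeff_C, coeff_C_mul, coeff_X]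
    split_ifs <;> simp_all
  refine ⟨u, hu, hcoeff 0 (by omega), ?_, fun i hi2 hit => ?_⟩
  · rwa [hcoeff 1 (by omega), Int.modEq_iff_dvd]
  · rw [hcoeff i (by omega), if_neg (by omega), if_neg (by omega)]

theorem stmt_4 (p : ℕ) (hp : p.Prime) (a : PowerSeries ℤ)
    (h0 : PowerSeries.coeff 0 a = (p : ℤ))
    (h1 : Int.gcd (p : ℤ) (PowerSeries.coeff 1 a) = 1)
    (t : ℕ) (ht : 2 ≤ t) :
    ∃ u : PowerSeries ℤ, IsUnit u ∧
      PowerSeries.coeff 0 (u * a) = (p : ℤ) ∧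
      PowerSeries.coeff 1 (u * a) ≡ PowerSeries.coeff 1 a [ZMOD (p : ℤ)] ∧
      ∀ i, 2 ≤ i → i ≤ t → PowerSeries.coeff i (u * a) = 0 :=
  stmt_4_general p a h0 h1 t
end

section
/- Let p be an odd prime, α, β integers with gcd(p,α) = gcd(p,β) = 1, and n, m ≥ 1 with 2m < n. Then the polynomial f(x) = pⁿ + pᵐβx + αx², viewed as an element of ℤ[[x]], is reducible in ℤ[[x]]. -/
/-!
Write `n = 2m + d` and look for `f = A * B` with `A(0) = pᵐ⁺ᵈ` and `B(0) = pᵐ`. Comparing the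
coefficients of `xᵏ` gives `pᵐ (aₖ + pᵈ bₖ) = (terms of lower degree)`, which is solvable exactly
when `pᵐ` divides the right-hand side. The coefficient `bₖ` stays free, and it enters the next
equation linearly through `a₁ - pᵈ b₁`, a unit modulo `p`; so it can be chosen to make the next
equation solvable. Only the degree-one step is quadratic: it asks for a root of
`pᵈ t² - β t + α` modulo `pᵐ`, which Hensel lifting provides because `β` is a unit modulo `p`.
-/

open PowerSeries

theorem IsCoprime.exists_dvd_mul_sub_one {R : Type*} [CommRing R] {a b : R} (h : IsCoprime a b) :
    ∃ w, a ∣ b * w - 1 := by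
  obtain ⟨u, w, huw⟩ := h
  exact ⟨w, ⟨-u, by linear_combination huw⟩⟩

theorem exists_pow_dvd_mul_sq_sub_mul_add {R : Type*} [CommRing R] {P e β β' : R} (α : R)
    (he : P ∣ e) (hβ : P ∣ β * β' - 1) (j : ℕ) : ∃ t, P ^ j ∣ e * t ^ 2 - β * t + α := by
  induction j with
  | zero => exact ⟨0, by simp⟩
  | succ j ih =>
    obtain ⟨t, E, hE⟩ := ih
    -- Newton step: modulo `P` the derivative of the quadratic is `-β`.
    refine ⟨t + E * β' * P ^ j, ?_⟩
    have hexpand : e * (t + E * β' * P ^ j) ^ 2 - β * (t + E * β' * P ^ j) + α =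
        P ^ j * (-E * (β * β' - 1) + 2 * E * β' * t * e + (E * β') ^ 2 * P ^ j * e) := by
      linear_combination hE
    rw [hexpand, pow_succ]
    exact mul_dvd_mul_left _ (dvd_add (dvd_add (hβ.mul_left _) (he.mul_left _)) (he.mul_left _))

namespace PowerSeries

variable {R : Type*} [CommRing R]

theorem mul_eq_of_coeff_approx {A B f : R⟦X⟧} (Aₙ Bₙ : ℕ → R⟦X⟧)
    (hA : ∀ k j, j ≤ k → coeff j (Aₙ k) = coeff j A)
    (hB : ∀ k j, j ≤ k → coeff j (Bₙ k) = coeff j B)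
    (hf : ∀ k, coeff k (Aₙ k * Bₙ k) = coeff k f) : A * B = f := by
  ext k
  rw [← hf k, coeff_mul, coeff_mul]
  refine Finset.sum_congr rfl fun ij hij => ?_
  rw [hA k ij.1 (Finset.HasAntidiagonal.antidiagonal.fst_le hij),
    hB k ij.2 (Finset.HasAntidiagonal.antidiagonal.snd_le hij)]

theorem coeff_add_C_mul_X_pow_mul_add (A B : R⟦X⟧) (a b : R) {n j : ℕ} (hj : j < 2 * n) :
    coeff j ((A + C a * X ^ n) * (B + C b * X ^ n)) =
      coeff j (A * B) + if n ≤ j then a * coeff (j - n) B + b * coeff (j - n) A else 0 := by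
  have hexpand : (A + C a * X ^ n) * (B + C b * X ^ n) =
      A * B + C a * (X ^ n * B) + C b * (X ^ n * A) + X ^ (2 * n) * C (a * b) := by
    rw [map_mul]; ring
  rw [hexpand]
  simp only [map_add, coeff_C_mul, coeff_X_pow_mul', show ¬ 2 * n ≤ j by omega, if_false,
    add_zero]
  split_ifs <;> ring

section Lifting

variable (f : R⟦X⟧) (u e a₁ b₁ w : R) (q : R → R)

/-- Step `k + 1` adds coefficients `a, b` in degree `k + 2` with `u * (a + e * b)` equal to the
defect there, and uses the freedom in `b` to make the next defect divisible by `u`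
(`w` inverts `a₁ - e * b₁` modulo `u`). -/
noncomputable def liftApprox : ℕ → R⟦X⟧ × R⟦X⟧
  | 0 => (C (e * u) + C a₁ * X, C u + C b₁ * X)
  | k + 1 =>
    let D := f - (liftApprox k).1 * (liftApprox k).2
    let c := q (coeff (k + 2) D)
    let b := w * (coeff (k + 3) D - c * b₁)
    ((liftApprox k).1 + C (c - e * b) * X ^ (k + 2), (liftApprox k).2 + C b * X ^ (k + 2))

local notation "𝔄" => liftApprox f u e a₁ b₁ w q

theorem coeff_liftApprox_succ {j k : ℕ} (hj : j < k + 2) :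
    coeff j (𝔄 (k + 1)).1 = coeff j (𝔄 k).1 ∧ coeff j (𝔄 (k + 1)).2 = coeff j (𝔄 k).2 := by
  simp only [liftApprox, map_add, coeff_C_mul_X_pow, if_neg hj.ne, add_zero, and_self]

theorem coeff_liftApprox_of_le {j k : ℕ} (hjk : j ≤ k) :
    coeff j (𝔄 k).1 = coeff j (𝔄 j).1 ∧ coeff j (𝔄 k).2 = coeff j (𝔄 j).2 := by
  induction k, hjk using Nat.le_induction with
  | base => exact ⟨rfl, rfl⟩
  | succ k hjk ih =>
    obtain ⟨h₁, h₂⟩ := coeff_liftApprox_succ f u e a₁ b₁ w q (show j < k + 2 by omega)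
    exact ⟨h₁.trans ih.1, h₂.trans ih.2⟩

theorem coeff_liftApprox_zero_one (k : ℕ) :
    coeff 0 (𝔄 k).1 = e * u ∧ coeff 1 (𝔄 k).1 = a₁ ∧ coeff 0 (𝔄 k).2 = u ∧
      coeff 1 (𝔄 k).2 = b₁ := by
  induction k with
  | zero => simp [liftApprox]
  | succ k ih =>
    rw [(coeff_liftApprox_succ f u e a₁ b₁ w q (j := 0) (by omega)).1,
      (coeff_liftApprox_succ f u e a₁ b₁ w q (j := 1) (by omega)).1,
      (coeff_liftApprox_succ f u e a₁ b₁ w q (j := 0) (by omega)).2,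
      (coeff_liftApprox_succ f u e a₁ b₁ w q (j := 1) (by omega)).2]
    exact ih

variable {f u e a₁ b₁ w q}

theorem liftApprox_spec (h0 : coeff 0 f = e * u * u) (h1 : coeff 1 f = u * (a₁ + e * b₁))
    (h2 : u ∣ coeff 2 f - a₁ * b₁) (hw : u ∣ (a₁ - e * b₁) * w - 1)
    (hq : ∀ T, u ∣ T → u * q T = T) (k : ℕ) :
    (∀ j ≤ k + 1, coeff j ((𝔄 k).1 * (𝔄 k).2) = coeff j f) ∧
      u ∣ coeff (k + 2) (f - (𝔄 k).1 * (𝔄 k).2) := by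
  induction k with
  | zero =>
    have hprod : (𝔄 0).1 * (𝔄 0).2 =
        C (e * u * u) + C (u * (a₁ + e * b₁)) * X ^ 1 + C (a₁ * b₁) * X ^ 2 := by
      simp only [liftApprox, map_mul, map_add]; ring
    refine ⟨fun j hj => ?_, ?_⟩
    · interval_cases j <;> simp only [hprod, map_add, coeff_C, coeff_C_mul_X_pow] <;>
        norm_num [h0, h1]
    · simp only [hprod, map_sub, map_add, coeff_C, coeff_C_mul_X_pow]
      norm_num [h2]
  | succ k ih =>
    obtain ⟨hlow, hdvd⟩ := ih
    set A := (𝔄 k).1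
    set B := (𝔄 k).2
    set c := q (coeff (k + 2) (f - A * B))
    set b := w * (coeff (k + 3) (f - A * B) - c * b₁)
    have hstep : 𝔄 (k + 1) = (A + C (c - e * b) * X ^ (k + 2), B + C b * X ^ (k + 2)) := rfl
    have hc : u * c = coeff (k + 2) (f - A * B) := hq _ hdvd
    obtain ⟨hA₀, hA₁, hB₀, hB₁⟩ := coeff_liftApprox_zero_one f u e a₁ b₁ w q k
    rw [hstep]
    refine ⟨fun j hj => ?_, ?_⟩
    · rw [coeff_add_C_mul_X_pow_mul_add _ _ _ _ (by omega)]
      rcases (show j ≤ k + 1 ∨ j = k + 2 by omega) with hj | rfl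
      · rw [if_neg (by omega), add_zero, hlow j hj]
      · rw [if_pos le_rfl, Nat.sub_self, hA₀, hB₀]
        rw [map_sub] at hc
        linear_combination hc
    · rw [map_sub, coeff_add_C_mul_X_pow_mul_add _ _ _ _ (by omega), if_pos (by omega),
        show k + 1 + 2 - (k + 2) = 1 by omega, hA₁, hB₁]
      have hdefect : coeff (k + 3) f - (coeff (k + 3) (A * B) + ((c - e * b) * b₁ + b * a₁)) =
          -(coeff (k + 3) (f - A * B) - c * b₁) * ((a₁ - e * b₁) * w - 1) := by
        simp only [b, map_sub]; ring
      exact hdefect ▸ hw.mul_left _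

theorem exists_mul_eq_of_approx (h0 : coeff 0 f = e * u * u)
    (h1 : coeff 1 f = u * (a₁ + e * b₁)) (h2 : u ∣ coeff 2 f - a₁ * b₁)
    (hw : u ∣ (a₁ - e * b₁) * w - 1) :
    ∃ A B : R⟦X⟧, constantCoeff A = e * u ∧ constantCoeff B = u ∧ A * B = f := by
  have hdiv (T : R) : ∃ c, u ∣ T → u * c = T := by
    by_cases hT : u ∣ T
    · obtain ⟨c, rfl⟩ := hT
      exact ⟨c, fun _ => rfl⟩
    · exact ⟨0, fun h => absurd h hT⟩
  choose q hq using hdiv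
  set Aₙ := fun k => (liftApprox f u e a₁ b₁ w q k).1
  set Bₙ := fun k => (liftApprox f u e a₁ b₁ w q k).2
  refine ⟨mk fun j => coeff j (Aₙ j), mk fun j => coeff j (Bₙ j), ?_, ?_, ?_⟩
  · rw [← coeff_zero_eq_constantCoeff_apply, coeff_mk]
    exact (coeff_liftApprox_zero_one f u e a₁ b₁ w q 0).1
  · rw [← coeff_zero_eq_constantCoeff_apply, coeff_mk]
    exact (coeff_liftApprox_zero_one f u e a₁ b₁ w q 0).2.2.1
  · refine mul_eq_of_coeff_approx Aₙ Bₙ (fun k j hj => ?_) (fun k j hj => ?_)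
      (fun k => (liftApprox_spec h0 h1 h2 hw hq k).1 k k.le_succ)
    · rw [coeff_mk]; exact (coeff_liftApprox_of_le f u e a₁ b₁ w q hj).1
    · rw [coeff_mk]; exact (coeff_liftApprox_of_le f u e a₁ b₁ w q hj).2

end Lifting

end PowerSeries

theorem stmt_5_general (p : ℕ) (hp : p.Prime) (α β : ℤ)
    (hβ : Int.gcd (p : ℤ) β = 1)
    (n m : ℕ) (hm : 1 ≤ m) (h : 2 * m < n) :
    ∃ a b : PowerSeries ℤ, ¬ IsUnit a ∧ ¬ IsUnit b ∧
      (PowerSeries.C (R := ℤ)) ((p : ℤ) ^ n) + (PowerSeries.C (R := ℤ)) ((p : ℤ) ^ m * β) * PowerSeries.X +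
        (PowerSeries.C (R := ℤ)) α * PowerSeries.X ^ 2 = a * b := by
  obtain ⟨d, hd, rfl⟩ : ∃ d, 1 ≤ d ∧ n = 2 * m + d := ⟨n - 2 * m, by omega, by omega⟩
  set P : ℤ := (p : ℤ)
  have hP : Prime P := Nat.prime_iff_prime_int.mp hp
  have hPβ : IsCoprime P β := Int.isCoprime_iff_gcd_eq_one.mpr hβ
  obtain ⟨c, hc⟩ : P ∣ P ^ d := dvd_pow_self _ (by omega)
  obtain ⟨β', hβ'⟩ := hPβ.exists_dvd_mul_sub_one
  obtain ⟨t, ht⟩ := exists_pow_dvd_mul_sq_sub_mul_add α ⟨c, hc⟩ hβ' m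
  obtain ⟨w, hw⟩ : ∃ w, P ^ m ∣ (β - P ^ d * t - P ^ d * t) * w - 1 := by
    rw [show β - P ^ d * t - P ^ d * t = β + P * (-2 * c * t) by rw [hc]; ring]
    exact (hPβ.add_mul_left_right _).pow_left.exists_dvd_mul_sub_one
  set f : ℤ⟦X⟧ := C (P ^ (2 * m + d)) + C (P ^ m * β) * X + C α * X ^ 2 with hf
  have hcoeff (j : ℕ) : coeff j f =
      if j = 0 then P ^ (2 * m + d) else if j = 1 then P ^ m * β else if j = 2 then α else 0 := by
    rcases j with _ | _ | _ | j <;>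
      simp only [hf, map_add, coeff_C, coeff_C_mul, coeff_X, coeff_X_pow] <;> norm_num
  obtain ⟨A, B, hA, hB, hAB⟩ := exists_mul_eq_of_approx (f := f) (u := P ^ m) (e := P ^ d)
    (a₁ := β - P ^ d * t) (b₁ := t) (by norm_num [hcoeff]; ring) (by norm_num [hcoeff])
    (by norm_num [hcoeff]
        rwa [show α - (β - P ^ d * t) * t = P ^ d * t ^ 2 - β * t + α by ring]) hw
  have hnonunit (F : ℤ⟦X⟧) (hF : P ∣ constantCoeff F) : ¬IsUnit F := fun hu =>
    hP.not_isUnit (isUnit_of_dvd_unit hF (hu.map constantCoeff))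
  refine ⟨A, B, hnonunit A ?_, hnonunit B ?_, hAB.symm⟩
  · rw [hA]; exact (dvd_pow_self _ (by omega)).mul_left _
  · rw [hB]; exact dvd_pow_self _ (by omega)

theorem stmt_5 (p : ℕ) (hp : p.Prime) (hodd : Odd p) (α β : ℤ)
    (hα : Int.gcd (p : ℤ) α = 1) (hβ : Int.gcd (p : ℤ) β = 1)
    (n m : ℕ) (hn : 1 ≤ n) (hm : 1 ≤ m) (h : 2 * m < n) :
    ∃ a b : PowerSeries ℤ, ¬ IsUnit a ∧ ¬ IsUnit b ∧
      (PowerSeries.C (R := ℤ)) ((p : ℤ) ^ n) + (PowerSeries.C (R := ℤ)) ((p : ℤ) ^ m * β) * PowerSeries.X +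
        (PowerSeries.C (R := ℤ)) α * PowerSeries.X ^ 2 = a * b :=
  stmt_5_general p hp α β hβ n m hm h
end

section
/- Let p be an odd prime, α, β integers with gcd(p,α) = gcd(p,β) = 1, and n, m ≥ 1 with 2m > n and n odd. Then the polynomial f(x) = pⁿ + pᵐβx + αx² is irreducible as an element of ℤ[[x]]. -/
/-!
Write `f = g * h` with constant terms `b pⁱ` and `c pʲ` (`b`, `c` units, `i + j = n`). If neither
factor is a unit then `i, j ≥ 1`, and `i ≠ j` because `n` is odd; say `i < j`, so also `i < m`.
Then `pⁱ⁺¹` divides `f₁ - g₁ h₀ = g₀ h₁ = b pⁱ h₁`, hence `p ∣ h₁`, and every term of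
`f₂ = g₀ h₂ + g₁ h₁ + g₂ h₀` is divisible by `p`, contradicting `p ∤ α`.
-/

open PowerSeries

namespace PowerSeries

variable {R : Type*} [CommRing R]

lemma coeff_two_mul (φ ψ : R⟦X⟧) : coeff 2 (φ * ψ) =
    constantCoeff φ * coeff 2 ψ + coeff 1 φ * coeff 1 ψ + coeff 2 φ * constantCoeff ψ := by
  simp [coeff_mul, Finset.Nat.antidiagonal_succ, add_assoc]

variable [IsDomain R] {p : R}

lemma _root_.Prime.dvd_coeff_two_mul (hp : Prime p) {g h : R⟦X⟧} {b : R} {i : ℕ}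
    (hb : IsUnit b) (hi : i ≠ 0) (hg : constantCoeff g = b * p ^ i)
    (hh : p ^ (i + 1) ∣ constantCoeff h) (h1 : p ^ (i + 1) ∣ coeff 1 (g * h)) :
    p ∣ coeff 2 (g * h) := by
  have hpg : p ∣ constantCoeff g := hg ▸ (dvd_pow_self p hi).mul_left b
  have hph : p ∣ constantCoeff h := (dvd_pow_self p i.succ_ne_zero).trans hh
  have hph1 : p ∣ coeff 1 h := by
    have : p ^ i * p ∣ p ^ i * (b * coeff 1 h) := by
      have := dvd_sub h1 (hh.mul_left (coeff 1 g))
      rw [coeff_one_mul, hg] at this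
      convert this using 1 <;> ring
    exact hb.dvd_mul_left.1 ((mul_dvd_mul_iff_left (pow_ne_zero i hp.ne_zero)).1 this)
  rw [coeff_two_mul]
  exact dvd_add (dvd_add (hpg.mul_right _) (hph1.mul_left _)) (hph.mul_left _)

theorem irreducible_of_constantCoeff_eq_prime_pow (hp : Prime p) {n m : ℕ} (hn : Odd n)
    (hnm : n < 2 * m) {f : R⟦X⟧} (h0 : constantCoeff f = p ^ n) (h1 : p ^ m ∣ coeff 1 f)
    (h2 : ¬p ∣ coeff 2 f) : Irreducible f := by
  refine ⟨fun hf => ?_, fun g h hgh => ?_⟩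
  · rw [isUnit_iff_constantCoeff, h0] at hf
    exact hp.not_isUnit ((isUnit_pow_iff hn.pos.ne').1 hf)
  obtain ⟨i, j, b, c, hij, hbc, hg, hh⟩ : ∃ (i j : ℕ) (b c : R), i + j = n ∧ 1 = b * c ∧
      constantCoeff g = b * p ^ i ∧ constantCoeff h = c * p ^ j :=
    mul_eq_mul_prime_pow hp (by rw [← map_mul, ← hgh, h0, one_mul])
  have hb : IsUnit b := IsUnit.of_mul_eq_one c hbc.symm
  have hc : IsUnit c := IsUnit.of_mul_eq_one_right b hbc.symm
  rcases Nat.eq_zero_or_pos i with rfl | hi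
  · left; rwa [isUnit_iff_constantCoeff, hg, pow_zero, mul_one]
  rcases Nat.eq_zero_or_pos j with rfl | hj
  · right; rwa [isUnit_iff_constantCoeff, hh, pow_zero, mul_one]
  have hne : i ≠ j := by rintro rfl; exact Nat.not_even_iff_odd.2 hn ⟨i, hij.symm⟩
  exfalso
  apply h2
  rcases hne.lt_or_gt with hlt | hlt
  · rw [hgh] at h1 ⊢
    exact hp.dvd_coeff_two_mul hb hi.ne' hg (hh ▸ (pow_dvd_pow p hlt).mul_left c)
      ((pow_dvd_pow p (by omega)).trans h1)
  · rw [hgh, mul_comm] at h1 ⊢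
    exact hp.dvd_coeff_two_mul hc hj.ne' hh (hg ▸ (pow_dvd_pow p hlt).mul_left b)
      ((pow_dvd_pow p (by omega)).trans h1)

end PowerSeries

theorem stmt_6_general (p : ℕ) (hp : p.Prime) (α β : ℤ)
    (hα : Int.gcd (p : ℤ) α = 1)
    (n m : ℕ) (h : n < 2 * m) (hnodd : Odd n) :
    Irreducible ((PowerSeries.C (R := ℤ)) ((p : ℤ) ^ n) +
      (PowerSeries.C (R := ℤ)) ((p : ℤ) ^ m * β) * PowerSeries.X +
      (PowerSeries.C (R := ℤ)) α * PowerSeries.X ^ 2) := by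
  have hpZ : Prime (p : ℤ) := Nat.prime_iff_prime_int.mp hp
  have hpα : ¬(p : ℤ) ∣ α := fun hd =>
    hpZ.not_isUnit ((Int.isCoprime_iff_gcd_eq_one.2 hα).isUnit_of_dvd' dvd_rfl hd)
  refine irreducible_of_constantCoeff_eq_prime_pow hpZ hnodd h ?_ ?_ ?_ <;>
    simp only [map_add, coeff_C_mul, coeff_C, coeff_X, coeff_X_pow]
  · simp
  · simp
  · simpa using hpα

theorem stmt_6 (p : ℕ) (hp : p.Prime) (hodd : Odd p) (α β : ℤ)
    (hα : Int.gcd (p : ℤ) α = 1) (hβ : Int.gcd (p : ℤ) β = 1)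
    (n m : ℕ) (hn : 1 ≤ n) (hm : 1 ≤ m) (h : n < 2 * m) (hnodd : Odd n) :
    Irreducible ((PowerSeries.C (R := ℤ)) ((p : ℤ) ^ n) +
      (PowerSeries.C (R := ℤ)) ((p : ℤ) ^ m * β) * PowerSeries.X +
      (PowerSeries.C (R := ℤ)) α * PowerSeries.X ^ 2) :=
  stmt_6_general p hp α β hα n m h hnodd
end

section
/- Let p be an odd prime, α, β integers with gcd(p,α) = gcd(p,β) = 1, and n, m ≥ 1 with 2m < n. Then pⁿ + pᵐβx + αx² is reducible as a polynomial over the p-adic integers ℤ_p. -/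
/-!
Completing the square, the roots of `α x² + pᵐβ x + pⁿ` are `pᵐ(-β ± s)/(2α)` where
`s² = β² - 4α p^(n - 2m)`. Since `β` is a unit, the right-hand side is congruent to the nonzero
square `β²` modulo `p`, so Hensel's lemma (for odd `p` the derivative `2β` is a unit) produces
`s` in `ℤ_[p]`; as `2α` is a unit too, both roots lie in `ℤ_[p]` and the polynomial splits into
two linear factors.
-/

open Polynomial

theorem Polynomial.exists_quadratic_eq_C_mul_X_sub_C_mul_X_sub_C {R : Type*} [CommRing R]
    {a b c s : R} (h2a : IsUnit (2 * a)) (hs : discrim a b c = s * s) :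
    ∃ r r' : R, C a * X ^ 2 + C b * X + C c = C a * (X - C r) * (X - C r') := by
  set i : R := ↑h2a.unit⁻¹
  have hi : 2 * a * i = 1 := h2a.mul_val_inv
  refine ⟨(-b + s) * i, (-b - s) * i, ?_⟩
  have hsum : a * ((-b + s) * i + (-b - s) * i) = -b := by linear_combination (-b) * hi
  have hprod : a * ((-b + s) * i * ((-b - s) * i)) = c := by
    rw [discrim] at hs
    linear_combination (a * i * i) * hs + c * (2 * a * i + 1) * hi
  calc C a * X ^ 2 + C b * X + C c
      = C a * X ^ 2 - C (a * ((-b + s) * i + (-b - s) * i)) * X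
        + C (a * ((-b + s) * i * ((-b - s) * i))) := by rw [hsum, hprod, map_neg]; ring
    _ = C a * (X - C ((-b + s) * i)) * (X - C ((-b - s) * i)) := by
      simp only [map_mul, map_add]
      ring

namespace PadicInt

variable {p : ℕ} [Fact p.Prime]

theorem isUnit_intCast_iff {z : ℤ} : IsUnit (z : ℤ_[p]) ↔ IsCoprime z p := by
  rw [isUnit_iff, norm_intCast_eq_one_iff]

theorem isUnit_two (hp : Odd p) : IsUnit (2 : ℤ_[p]) := by
  rw [isUnit_iff, ← Nat.cast_ofNat, norm_natCast_eq_one_iff]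
  exact Nat.coprime_two_right.mpr hp

theorem isSquare_of_norm_sub_sq_lt_one (hp : Odd p) {x b : ℤ_[p]} (hb : IsUnit b)
    (hx : ‖x - b ^ 2‖ < 1) : IsSquare x := by
  have hderiv : (X ^ 2 - C x).derivative.aeval b = 2 * b := by simp [one_add_one_eq_two]
  obtain ⟨s, hs, -⟩ := hensels_lemma (F := X ^ 2 - C x) (a := b) (by
    rw [hderiv, isUnit_iff.mp ((isUnit_two hp).mul hb), one_pow, ← norm_neg]
    simpa using hx)
  refine ⟨s, ?_⟩
  simp only [map_sub, map_pow, aeval_X, aeval_C, Algebra.algebraMap_self, RingHom.id_apply] at hs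
  linear_combination -hs

end PadicInt

theorem stmt_7_general (p : ℕ) [Fact p.Prime] (hodd : Odd p) (α β : ℤ)
    (hα : Int.gcd (p : ℤ) α = 1) (hβ : Int.gcd (p : ℤ) β = 1)
    (n m : ℕ) (h : 2 * m < n) :
    ∃ a b : Polynomial ℤ_[p], ¬ IsUnit a ∧ ¬ IsUnit b ∧
      Polynomial.C ((p : ℤ_[p]) ^ n) + Polynomial.C ((p : ℤ_[p]) ^ m * (β : ℤ_[p])) * Polynomial.X +
        Polynomial.C (α : ℤ_[p]) * Polynomial.X ^ 2 = a * b := by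
  have hαu : IsUnit (α : ℤ_[p]) :=
    PadicInt.isUnit_intCast_iff.mpr (Int.isCoprime_iff_gcd_eq_one.mpr hα).symm
  have hβu : IsUnit (β : ℤ_[p]) :=
    PadicInt.isUnit_intCast_iff.mpr (Int.isCoprime_iff_gcd_eq_one.mpr hβ).symm
  obtain ⟨s, hs⟩ : IsSquare ((β : ℤ_[p]) ^ 2 - 4 * α * p ^ (n - 2 * m)) := by
    refine PadicInt.isSquare_of_norm_sub_sq_lt_one hodd hβu ?_
    have hcast : (β : ℤ_[p]) ^ 2 - 4 * α * p ^ (n - 2 * m) - β ^ 2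
        = ((-(4 * α * p ^ (n - 2 * m)) : ℤ) : ℤ_[p]) := by push_cast; ring
    rw [hcast, PadicInt.norm_intCast_lt_one_iff]
    exact (dvd_mul_of_dvd_right (dvd_pow_self _ (by omega)) _).neg_right
  have hdisc : discrim (α : ℤ_[p]) (p ^ m * β) (p ^ n) = (p ^ m * s) * (p ^ m * s) := by
    have hn : (p : ℤ_[p]) ^ n = p ^ (2 * m) * p ^ (n - 2 * m) := by
      rw [← pow_add]
      congr 1
      omega
    rw [discrim, hn]
    linear_combination (p : ℤ_[p]) ^ (2 * m) * hs
  obtain ⟨r, r', hfac⟩ :=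
    exists_quadratic_eq_C_mul_X_sub_C_mul_X_sub_C ((PadicInt.isUnit_two hodd).mul hαu) hdisc
  refine ⟨C (α : ℤ_[p]) * (X - C r), X - C r', ?_, ?_, ?_⟩
  · refine not_isUnit_of_natDegree_pos _ ?_
    rw [natDegree_C_mul hαu.ne_zero, natDegree_X_sub_C]
    exact one_pos
  · exact not_isUnit_of_natDegree_pos _ (by rw [natDegree_X_sub_C]; exact one_pos)
  · rw [← hfac]
    ring

theorem stmt_7 (p : ℕ) [Fact p.Prime] (hodd : Odd p) (α β : ℤ)
    (hα : Int.gcd (p : ℤ) α = 1) (hβ : Int.gcd (p : ℤ) β = 1)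
    (n m : ℕ) (hn : 1 ≤ n) (hm : 1 ≤ m) (h : 2 * m < n) :
    ∃ a b : Polynomial ℤ_[p], ¬ IsUnit a ∧ ¬ IsUnit b ∧
      Polynomial.C ((p : ℤ_[p]) ^ n) + Polynomial.C ((p : ℤ_[p]) ^ m * (β : ℤ_[p])) * Polynomial.X +
        Polynomial.C (α : ℤ_[p]) * Polynomial.X ^ 2 = a * b :=
  stmt_7_general p hodd α β hα hβ n m h
end

section
/- Let p be an odd prime, ν, m ≥ 1 with m ≥ ν, and α, β integers coprime to p. If f(x) = p^{2ν} + pᵐβx + αx² admits a proper factorization f = a(x)·b(x) in ℤ[[x]] with both factors non-units, then the constant coefficients satisfy a₀ = b₀ = p^ν (up to sign). -/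
/-!
Write `A, B` for the constant coefficients of `a, b` and `a₁, b₁` for their linear ones.
Since `A * B = p ^ (2ν)` and neither factor is a unit, `A = u p^i` and `B = u⁻¹ p^j` with
`i, j ≥ 1` and `i + j = 2ν`. So `p` divides `A` and `B`, and the `x²`-coefficient
`α = A b₂ + a₁ b₁ + a₂ B` forces `p ∤ a₁ b₁`. If `i < j`, then in the `x`-coefficient
`A b₁ + a₁ B = p^m β` the term `A b₁` has valuation exactly `i < ν ≤ m`, while the other
two terms are divisible by `p^(i+1)`: impossible. By symmetry `i = j = ν`.
-/

open PowerSeries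

theorem PowerSeries.coeff_two_mul_s9 {R : Type*} [CommRing R] (a b : R⟦X⟧) :
    coeff 2 (a * b) =
      constantCoeff a * coeff 2 b + coeff 1 a * coeff 1 b + coeff 2 a * constantCoeff b := by
  simp [coeff_mul, Finset.Nat.antidiagonal_succ]
  ring

section Domain

variable {R : Type*} [CommRing R] [IsDomain R]

theorem exists_unit_mul_pow_of_mul_eq_prime_pow {p A B : R} (hp : Prime p) {n : ℕ}
    (h : A * B = p ^ n) :
    ∃ i j : ℕ, ∃ u : Rˣ, i + j = n ∧ A = u * p ^ i ∧ B = ↑u⁻¹ * p ^ j := by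
  obtain ⟨i, hin, ⟨u, hu⟩⟩ := (dvd_prime_pow hp n).mp ⟨B, h.symm⟩
  refine ⟨i, n - i, u⁻¹, by omega, by rw [← hu, mul_comm, u.mul_inv_cancel_right], ?_⟩
  rw [inv_inv]
  apply mul_left_cancel₀ (pow_ne_zero i hp.ne_zero)
  calc p ^ i * B = u * (A * B) := by rw [← hu]; ring
    _ = p ^ i * (u * p ^ (n - i)) := by
      rw [h, mul_left_comm, ← pow_add, Nat.add_sub_cancel' hin]

theorem not_pow_succ_dvd_pow_mul_add_pow_mul {p x y : R} (hp : p ≠ 0) {i j : ℕ} (hij : i < j)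
    (hx : ¬ p ∣ x) : ¬ p ^ (i + 1) ∣ p ^ i * x + p ^ j * y := by
  intro h
  have hy : p ^ (i + 1) ∣ p ^ j * y := (pow_dvd_pow p hij).mul_right y
  have hx' : p ^ i * p ∣ p ^ i * x := by
    rw [← pow_succ]
    simpa using (dvd_sub h hy)
  exact hx ((mul_dvd_mul_iff_left (pow_ne_zero i hp)).mp hx')

theorem PowerSeries.constantCoeff_eq_mul_prime_pow_of_quadratic_eq_mul {p α β : R}
    (hp : Prime p) {ν m : ℕ} (hm : ν ≤ m) (hα : ¬ p ∣ α) {a b : R⟦X⟧}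
    (ha : ¬ IsUnit a) (hb : ¬ IsUnit b)
    (hf : C (p ^ (2 * ν)) + C (p ^ m * β) * X + C α * X ^ 2 = a * b) :
    ∃ u : Rˣ, constantCoeff a = u * p ^ ν ∧ constantCoeff b = ↑u⁻¹ * p ^ ν := by
  have h0 : constantCoeff a * constantCoeff b = p ^ (2 * ν) := by
    simpa using (congrArg constantCoeff hf).symm
  have h1 := congrArg (coeff 1) hf
  have h2 := congrArg (coeff 2) hf
  simp only [map_add, coeff_succ_C, coeff_succ_mul_X, coeff_C, ↓reduceIte, zero_add,
    coeff_C_mul, coeff_X_pow, OfNat.one_ne_ofNat, mul_zero, add_zero, coeff_one_mul, mul_one,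
    coeff_two_mul_s9] at h1 h2
  obtain ⟨i, j, u, hij, hA, hB⟩ := exists_unit_mul_pow_of_mul_eq_prime_pow hp h0
  have hi : i ≠ 0 := by
    rintro rfl
    exact ha (isUnit_iff_constantCoeff.mpr (by simp [hA]))
  have hj : j ≠ 0 := by
    rintro rfl
    exact hb (isUnit_iff_constantCoeff.mpr (by simp [hB]))
  have hpA : p ∣ constantCoeff a := hA ▸ (dvd_pow_self p hi).mul_left _
  have hpB : p ∣ constantCoeff b := hB ▸ (dvd_pow_self p hj).mul_left _
  have hpab : ¬ p ∣ coeff 1 a * coeff 1 b := fun h ↦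
    hα (h2 ▸ dvd_add (dvd_add (hpA.mul_right _) h) (hpB.mul_left _))
  have hpa : ¬ p ∣ ↑u⁻¹ * coeff 1 a := by
    rw [Units.dvd_mul_left]; exact fun h ↦ hpab (h.mul_right _)
  have hpb : ¬ p ∣ u * coeff 1 b := by
    rw [Units.dvd_mul_left]; exact fun h ↦ hpab (h.mul_left _)
  have hlin : p ^ i * (u * coeff 1 b) + p ^ j * (↑u⁻¹ * coeff 1 a) = p ^ m * β := by
    rw [h1, hA, hB]; ring
  have hdvd : ∀ k < ν, p ^ (k + 1) ∣ p ^ i * (u * coeff 1 b) + p ^ j * (↑u⁻¹ * coeff 1 a) :=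
    fun k hk ↦ hlin ▸ (pow_dvd_pow p (by omega)).mul_right β
  have hiν : i = ν := by
    rcases lt_trichotomy i j with hlt | heq | hgt
    · exact absurd (hdvd i (by omega)) (not_pow_succ_dvd_pow_mul_add_pow_mul hp.ne_zero hlt hpb)
    · omega
    · refine absurd (hdvd j (by omega)) ?_
      rw [add_comm (p ^ i * _)]
      exact not_pow_succ_dvd_pow_mul_add_pow_mul hp.ne_zero hgt hpa
  exact ⟨u, hiν ▸ hA, (by omega : j = ν) ▸ hB⟩

end Domain

theorem stmt_9_general (p : ℕ) (hp : p.Prime) (ν m : ℕ)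
    (hm : ν ≤ m) (α β : ℤ)
    (hα : Int.gcd (p : ℤ) α = 1)
    (a b : PowerSeries ℤ) (ha : ¬ IsUnit a) (hb : ¬ IsUnit b)
    (hf : PowerSeries.C ((p : ℤ) ^ (2 * ν)) +
      PowerSeries.C ((p : ℤ) ^ m * β) * PowerSeries.X +
      PowerSeries.C α * PowerSeries.X ^ 2 = a * b) :
    (PowerSeries.constantCoeff a = (p : ℤ) ^ ν ∧ PowerSeries.constantCoeff b = (p : ℤ) ^ ν) ∨
    (PowerSeries.constantCoeff a = -(p : ℤ) ^ ν ∧ PowerSeries.constantCoeff b = -(p : ℤ) ^ ν) := by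
  have hpα : ¬ (p : ℤ) ∣ α := fun h ↦ hp.ne_one (by simpa [hα] using Int.dvd_gcd dvd_rfl h)
  obtain ⟨u, hA, hB⟩ := constantCoeff_eq_mul_prime_pow_of_quadratic_eq_mul
    (Nat.prime_iff_prime_int.mp hp) hm hpα ha hb hf
  rcases Int.units_eq_one_or u with rfl | rfl
  · exact Or.inl ⟨by simpa using hA, by simpa using hB⟩
  · exact Or.inr ⟨by simpa using hA, by simpa using hB⟩

theorem stmt_9 (p : ℕ) (hp : p.Prime) (hodd : Odd p) (ν m : ℕ)
    (hν : 1 ≤ ν) (hm : ν ≤ m) (α β : ℤ)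
    (hα : Int.gcd (p : ℤ) α = 1) (hβ : Int.gcd (p : ℤ) β = 1)
    (a b : PowerSeries ℤ) (ha : ¬ IsUnit a) (hb : ¬ IsUnit b)
    (hf : PowerSeries.C ((p : ℤ) ^ (2 * ν)) +
      PowerSeries.C ((p : ℤ) ^ m * β) * PowerSeries.X +
      PowerSeries.C α * PowerSeries.X ^ 2 = a * b) :
    (PowerSeries.constantCoeff a = (p : ℤ) ^ ν ∧ PowerSeries.constantCoeff b = (p : ℤ) ^ ν) ∨
    (PowerSeries.constantCoeff a = -(p : ℤ) ^ ν ∧ PowerSeries.constantCoeff b = -(p : ℤ) ^ ν) :=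
  stmt_9_general p hp ν m hm α β hα a b ha hb hf
end

section
/- Let p be an odd prime, m ≥ ν ≥ 1, and α, β integers coprime to p. If f̂(x) = p² + p^{m−ν+1}βx + αx² is reducible as a polynomial over ℤ_p, then f(x) = p^{2ν} + pᵐβx + αx² is reducible in ℤ[[x]]. -/
/-!
Since `α` is a `p`-adic unit, a nontrivial factorization of `f̂` over `ℤ_p` consists of two linear
factors, so `f̂` has a root `r`. Comparing `p`-adic valuations gives `r = p s`, and from `s` one
reads off `c, d ∈ ℤ_p` with `c + d = p^(m-ν) β` and `c d = α`, i.e.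
`f = (p^ν + c x)(p^ν + d x)` in `ℤ_p[[x]]`. The first factor is moved into `ℤ[[x]]` by a unit
`U ∈ ℤ_p[[x]]` whose coefficients are chosen one at a time. Then `B = (p^ν + d x) U⁻¹` satisfies
`(p^ν + c x) U · B = f` with an integral first factor of constant term `p^ν`, so the coefficients
of `B` are integral by induction: an integer divisible by `p^ν` in `ℤ_p` is divisible by it in `ℤ`. Both factors have constant term divisible by `p`, so neither is a unit.
-/

open Polynomial in
theorem Polynomial.exists_isRoot_of_not_irreducible {R : Type*} [CommRing R] [IsDomain R]
    {f : R[X]} (hf : IsUnit f.leadingCoeff) (h2 : 2 ≤ f.natDegree) (h3 : f.natDegree ≤ 3)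
    (hirr : ¬ Irreducible f) : ∃ r, f.IsRoot r := by
  set g := C (↑hf.unit⁻¹ : R) * f
  have hmonic : g.Monic := by
    rw [Monic, leadingCoeff_mul, leadingCoeff_C]
    exact hf.val_inv_mul
  have hdeg : g.natDegree = f.natDegree := natDegree_C_mul (Units.ne_zero _)
  rw [← irreducible_isUnit_mul (isUnit_C.mpr (Units.isUnit _)),
    hmonic.irreducible_iff_roots_eq_zero_of_degree_le_three (hdeg ▸ h2) (hdeg ▸ h3)] at hirr
  obtain ⟨r, hr⟩ := Multiset.exists_mem_of_ne_zero hirr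
  have hgr : g.IsRoot r := (mem_roots hmonic.ne_zero).mp hr
  exact ⟨r, by simpa [g, IsRoot] using hgr⟩

theorem Prime.exists_add_eq_and_mul_eq_of_root {R : Type*} [CommRing R] [IsDomain R]
    {π a b r : R} (hπ : Prime π) (ha : ¬ π ∣ a) (k : ℕ)
    (hr : π ^ 2 + π ^ (k + 1) * b * r + a * r ^ 2 = 0) :
    ∃ c d : R, c + d = π ^ k * b ∧ c * d = a := by
  have hπr : π ∣ r := by
    have : π ∣ a * r ^ 2 := ⟨-(π + π ^ k * b * r), by linear_combination hr⟩
    exact hπ.dvd_of_dvd_pow ((hπ.dvd_mul.mp this).resolve_left ha)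
  obtain ⟨s, rfl⟩ := hπr
  have hs : 1 + π ^ k * b * s + a * s ^ 2 = 0 := by
    have : π ^ 2 * (1 + π ^ k * b * s + a * s ^ 2) = 0 := by linear_combination hr
    exact (mul_eq_zero.mp this).resolve_left (pow_ne_zero _ hπ.ne_zero)
  -- `c = -a s` and `d = -s⁻¹`, the latter written without inverting `s`
  exact ⟨-(a * s), a * s + π ^ k * b, by ring, by linear_combination (-a) * hs⟩

namespace PowerSeries

variable {R S : Type*} [CommRing R] [CommRing S]

theorem exists_map_eq_of_coeff_mem_range (φ : R →+* S) {G : S⟦X⟧}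
    (hG : ∀ n, coeff n G ∈ φ.range) : ∃ G' : R⟦X⟧, map φ G' = G := by
  choose g hg using hG
  exact ⟨mk g, by ext n; simp [hg]⟩

theorem coeff_mem_of_coeff_mul_mem {T : Subring S} {A B : S⟦X⟧} (hA : ∀ n, coeff n A ∈ T)
    (hAB : ∀ n, coeff n (A * B) ∈ T) (hdiv : ∀ s, constantCoeff A * s ∈ T → s ∈ T) (n : ℕ) :
    coeff n B ∈ T := by
  induction n using Nat.strong_induction_on with
  | _ n ih =>
    have h := hAB n
    rw [coeff_mul, Finset.Nat.sum_antidiagonal_eq_sum_range_succ_mk, Finset.sum_range_succ'] at h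
    simp only [Nat.sub_zero, coeff_zero_eq_constantCoeff_apply] at h
    have hrest : ∑ i ∈ Finset.range n, coeff (i + 1) A * coeff (n - (i + 1)) B ∈ T :=
      T.sum_mem fun i hi ↦ T.mul_mem (hA _) (ih _ (by simp at hi; omega))
    apply hdiv
    simpa using T.sub_mem h hrest

end PowerSeries

namespace PadicInt

variable {p : ℕ} [Fact p.Prime]

theorem not_dvd_intCast_iff_isUnit {z : ℤ} : ¬ (p : ℤ) ∣ z ↔ IsUnit (z : ℤ_[p]) := by
  rw [← norm_int_lt_one_iff_dvd, ← not_isUnit_iff, not_not]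

open Polynomial in
theorem exists_add_eq_and_mul_eq (k : ℕ) {α β : ℤ} (hα : ¬ (p : ℤ) ∣ α)
    (h : ∃ a b : ℤ_[p][X], ¬ IsUnit a ∧ ¬ IsUnit b ∧
      C ((p : ℤ_[p]) ^ 2) + C ((p : ℤ_[p]) ^ (k + 1) * (β : ℤ_[p])) * X + C (α : ℤ_[p]) * X ^ 2
        = a * b) :
    ∃ c d : ℤ_[p], c + d = (p : ℤ_[p]) ^ k * β ∧ c * d = α := by
  obtain ⟨a, b, ha, hb, hab⟩ := h
  have hαu : IsUnit (α : ℤ_[p]) := not_dvd_intCast_iff_isUnit.mp hα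
  set f := C ((p : ℤ_[p]) ^ 2) + C ((p : ℤ_[p]) ^ (k + 1) * (β : ℤ_[p])) * X +
    C (α : ℤ_[p]) * X ^ 2
  have hf : f = C (α : ℤ_[p]) * X ^ 2 + C ((p : ℤ_[p]) ^ (k + 1) * (β : ℤ_[p])) * X +
      C ((p : ℤ_[p]) ^ 2) := by ring
  have hdeg : f.natDegree = 2 := hf ▸ natDegree_quadratic hαu.ne_zero
  obtain ⟨r, hr⟩ := exists_isRoot_of_not_irreducible
    (hf ▸ (leadingCoeff_quadratic hαu.ne_zero).symm ▸ hαu) hdeg.ge (by omega)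
    fun hirr ↦ (hirr.isUnit_or_isUnit hab).elim ha hb
  refine prime_p.exists_add_eq_and_mul_eq_of_root
    (fun hd ↦ prime_p.not_isUnit (isUnit_of_dvd_unit hd hαu)) k (r := r) ?_
  simpa [f] using hr

open PowerSeries

theorem map_quadratic_eq_mul {ν m : ℕ} (hm : ν ≤ m) {α β : ℤ} {c d : ℤ_[p]}
    (hsum : c + d = (p : ℤ_[p]) ^ (m - ν) * β) (hprod : c * d = α) :
    map (Int.castRingHom ℤ_[p]) (C ((p : ℤ) ^ (2 * ν)) + C ((p : ℤ) ^ m * β) * X + C α * X ^ 2) =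
      (C ((p : ℤ_[p]) ^ ν) + C c * X) * (C ((p : ℤ_[p]) ^ ν) + C d * X) := by
  simp only [map_add (map _), map_mul (map _), map_pow (map _), map_C, map_X,
    Int.coe_castRingHom, Int.cast_mul, Int.cast_pow, Int.cast_natCast]
  rw [← hprod, ← pow_mul_pow_sub (p : ℤ_[p]) hm, mul_assoc, ← hsum, mul_comm 2, pow_mul]
  simp only [map_add, map_mul, map_pow]
  ring

theorem mem_range_of_pow_mul_mem_range (k : ℕ) {s : ℤ_[p]}
    (hs : (p : ℤ_[p]) ^ k * s ∈ (Int.castRingHom ℤ_[p]).range) :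
    s ∈ (Int.castRingHom ℤ_[p]).range := by
  obtain ⟨z, hz⟩ := hs
  have hdvd : (p : ℤ) ^ k ∣ z := by
    rw [← norm_int_le_pow_iff_dvd, ← norm_p_pow]
    simp only [eq_intCast] at hz
    rw [hz, norm_mul]
    exact mul_le_of_le_one_right (norm_nonneg _) (norm_le_one s)
  obtain ⟨w, rfl⟩ := hdvd
  refine ⟨w, mul_left_cancel₀ (pow_ne_zero k prime_p.ne_zero) ?_⟩
  simpa using hz

theorem exists_coeff_linear_mul_unit_mem_range (k : ℕ) (c : ℤ_[p]) :
    ∃ U : ℤ_[p]⟦X⟧ˣ, constantCoeff (U : ℤ_[p]⟦X⟧) = 1 ∧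
      ∀ n, coeff n ((C ((p : ℤ_[p]) ^ k) + C c * X) * (U : ℤ_[p]⟦X⟧)) ∈
        (Int.castRingHom ℤ_[p]).range := by
  -- `y` is `(appr x k - x) / p ^ k`
  have hstep (x : ℤ_[p]) :
      ∃ y : ℤ_[p], (p : ℤ_[p]) ^ k * y + x ∈ (Int.castRingHom ℤ_[p]).range := by
    obtain ⟨y, hy⟩ := Ideal.mem_span_singleton.mp (appr_spec k x)
    exact ⟨-y, x.appr k, by simp only [eq_intCast, Int.cast_natCast]; linear_combination -hy⟩
  choose next hnext using hstep
  -- the coefficient of `X ^ (n + 1)` in the product is `p ^ k * u (n + 1) + c * u n`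
  set u : ℕ → ℤ_[p] := fun n ↦ (fun x ↦ next (c * x))^[n] 1
  have hu : IsUnit (mk u) := by rw [isUnit_iff_constantCoeff]; simp [u]
  refine ⟨hu.unit, by simp [u], ?_⟩
  rw [hu.unit_spec]
  rintro (_ | n)
  · exact ⟨(p : ℤ) ^ k, by simp [u]⟩
  · rw [add_mul, map_add, coeff_C_mul, mul_assoc, coeff_C_mul, coeff_succ_X_mul, coeff_mk,
      coeff_mk]
    simp only [u, Function.iterate_succ_apply']
    exact hnext _

theorem not_isUnit_of_map_eq {k : ℕ} (hk : k ≠ 0) {G : ℤ⟦X⟧} {e : ℤ_[p]} {V : ℤ_[p]⟦X⟧}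
    (h : map (Int.castRingHom ℤ_[p]) G = (C ((p : ℤ_[p]) ^ k) + C e * X) * V) : ¬ IsUnit G := by
  intro hG
  have hunit := (hG.map (map (Int.castRingHom ℤ_[p]))).map (constantCoeff (R := ℤ_[p]))
  rw [h, map_mul] at hunit
  simp only [map_add, constantCoeff_C, map_mul, constantCoeff_X, mul_zero, add_zero] at hunit
  exact prime_p.not_isUnit ((isUnit_pow_iff hk).mp (isUnit_of_mul_isUnit_left hunit))

end PadicInt

open PowerSeries in
theorem stmt_12_general (p : ℕ) [Fact p.Prime] (ν m : ℕ)
    (hν : 1 ≤ ν) (hm : ν ≤ m) (α β : ℤ)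
    (hα : Int.gcd (p : ℤ) α = 1)
    (h : ∃ a b : Polynomial ℤ_[p], ¬ IsUnit a ∧ ¬ IsUnit b ∧
      Polynomial.C ((p : ℤ_[p]) ^ 2) +
        Polynomial.C ((p : ℤ_[p]) ^ (m - ν + 1) * (β : ℤ_[p])) * Polynomial.X +
        Polynomial.C (α : ℤ_[p]) * Polynomial.X ^ 2 = a * b) :
    ∃ a b : PowerSeries ℤ, ¬ IsUnit a ∧ ¬ IsUnit b ∧
      (PowerSeries.C (R := ℤ)) ((p : ℤ) ^ (2 * ν)) +
        (PowerSeries.C (R := ℤ)) ((p : ℤ) ^ m * β) * PowerSeries.X +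
        (PowerSeries.C (R := ℤ)) α * PowerSeries.X ^ 2 = a * b := by
  have hpα : ¬ (p : ℤ) ∣ α := by
    rw [Int.natCast_dvd]
    exact (Nat.Prime.coprime_iff_not_dvd Fact.out).mp (by simpa [Int.gcd] using hα)
  obtain ⟨c, d, hsum, hprod⟩ := PadicInt.exists_add_eq_and_mul_eq (m - ν) hpα h
  obtain ⟨U, hU0, hAint⟩ := PadicInt.exists_coeff_linear_mul_unit_mem_range ν c
  set ρ := Int.castRingHom ℤ_[p]
  have hF : map ρ (C ((p : ℤ) ^ (2 * ν)) + C ((p : ℤ) ^ m * β) * X + C α * X ^ 2) =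
      ((C ((p : ℤ_[p]) ^ ν) + C c * X) * (U : ℤ_[p]⟦X⟧)) *
        ((C ((p : ℤ_[p]) ^ ν) + C d * X) * ((U⁻¹ : ℤ_[p]⟦X⟧ˣ) : ℤ_[p]⟦X⟧)) := by
    rw [PadicInt.map_quadratic_eq_mul hm hsum hprod]
    linear_combination (C ((p : ℤ_[p]) ^ ν) + C c * X) * (C ((p : ℤ_[p]) ^ ν) + C d * X) *
      U.mul_inv.symm
  have hBint := coeff_mem_of_coeff_mul_mem hAint
    (fun n ↦ by rw [← hF, coeff_map]; exact ⟨_, rfl⟩)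
    (fun s hs ↦ PadicInt.mem_range_of_pow_mul_mem_range ν (by simpa [hU0] using hs))
  obtain ⟨A, hA⟩ := exists_map_eq_of_coeff_mem_range ρ hAint
  obtain ⟨B, hB⟩ := exists_map_eq_of_coeff_mem_range ρ hBint
  refine ⟨A, B, PadicInt.not_isUnit_of_map_eq (by omega) hA,
    PadicInt.not_isUnit_of_map_eq (by omega) hB, map_injective ρ Int.cast_injective ?_⟩
  rw [hF, map_mul, hA, hB]

theorem stmt_12 (p : ℕ) [Fact p.Prime] (hodd : Odd p) (ν m : ℕ)
    (hν : 1 ≤ ν) (hm : ν ≤ m) (α β : ℤ)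
    (hα : Int.gcd (p : ℤ) α = 1) (hβ : Int.gcd (p : ℤ) β = 1)
    (h : ∃ a b : Polynomial ℤ_[p], ¬ IsUnit a ∧ ¬ IsUnit b ∧
      Polynomial.C ((p : ℤ_[p]) ^ 2) +
        Polynomial.C ((p : ℤ_[p]) ^ (m - ν + 1) * (β : ℤ_[p])) * Polynomial.X +
        Polynomial.C (α : ℤ_[p]) * Polynomial.X ^ 2 = a * b) :
    ∃ a b : PowerSeries ℤ, ¬ IsUnit a ∧ ¬ IsUnit b ∧
      (PowerSeries.C (R := ℤ)) ((p : ℤ) ^ (2 * ν)) +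
        (PowerSeries.C (R := ℤ)) ((p : ℤ) ^ m * β) * PowerSeries.X +
        (PowerSeries.C (R := ℤ)) α * PowerSeries.X ^ 2 = a * b :=
  stmt_12_general p ν m hν hm α β hα h
end

section
/- Let p be a prime, n ≥ 1, and β an integer with gcd(p,β) = 1. Any power series in ℤ[[x]] of the form pⁿ + βx + c₂x² + c₃x³ + ⋯ is irreducible in ℤ[[x]]. -/
open PowerSeries

theorem Prime.dvd_of_dvd_pow_of_not_isUnit {M : Type*} [CommMonoidWithZero M] [IsCancelMulZero M]
    {q a : M} (hq : Prime q) {n : ℕ} (ha : a ∣ q ^ n) (hu : ¬IsUnit a) : q ∣ a := by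
  obtain ⟨i, -, hi⟩ := (dvd_prime_pow hq n).mp ha
  cases i with
  | zero => exact absurd (hi.isUnit_iff.mpr (by simp)) hu
  | succ i => exact (dvd_pow_self q i.succ_ne_zero).trans hi.symm.dvd

/-- In a factorization `f = a * b` into non-units, `q` divides both constant coefficients,
hence also `coeff 1 f = coeff 1 a * constantCoeff b + coeff 1 b * constantCoeff a`. -/
theorem PowerSeries.irreducible_of_constantCoeff_eq_prime_pow_s14 {R : Type*} [CommRing R] [IsDomain R]
    {q : R} (hq : Prime q) {n : ℕ} (hn : n ≠ 0) {f : R⟦X⟧}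
    (h0 : constantCoeff f = q ^ n) (h1 : ¬q ∣ coeff 1 f) : Irreducible f := by
  refine ⟨fun hf => ?_, fun a b hab => ?_⟩
  · rw [isUnit_iff_constantCoeff, h0] at hf
    exact hq.not_isUnit ((isUnit_pow_iff hn).mp hf)
  · by_contra! ⟨ha, hb⟩
    rw [isUnit_iff_constantCoeff] at ha hb
    have hab0 : constantCoeff a * constantCoeff b = q ^ n := by rw [← map_mul, ← hab, h0]
    have hqa := hq.dvd_of_dvd_pow_of_not_isUnit (Dvd.intro _ hab0) ha
    have hqb := hq.dvd_of_dvd_pow_of_not_isUnit (Dvd.intro_left _ hab0) hb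
    apply h1
    rw [hab, coeff_one_mul]
    exact dvd_add (dvd_mul_of_dvd_right hqb _) (dvd_mul_of_dvd_right hqa _)

theorem stmt_14 (p : ℕ) (hp : p.Prime) (n : ℕ) (hn : 1 ≤ n) (β : ℤ)
    (hβ : Int.gcd (p : ℤ) β = 1) (f : PowerSeries ℤ)
    (h0 : PowerSeries.coeff 0 f = (p : ℤ) ^ n)
    (h1 : PowerSeries.coeff 1 f = β) :
    Irreducible f := by
  have hpZ : Prime (p : ℤ) := Nat.prime_iff_prime_int.mp hp
  have hpβ : ¬(p : ℤ) ∣ β := fun h =>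
    hpZ.not_isUnit ((Int.isCoprime_iff_gcd_eq_one.mpr hβ).isUnit_of_dvd' dvd_rfl h)
  refine irreducible_of_constantCoeff_eq_prime_pow_s14 hpZ (Nat.one_le_iff_ne_zero.mp hn) ?_ (h1 ▸ hpβ)
  rwa [← coeff_zero_eq_constantCoeff_apply]
end

section
/- Let p be an odd prime, n ≥ 1, and α an integer with gcd(p,α) = 1. The polynomial f(x) = pⁿ + αx² is reducible in ℤ[[x]] if and only if n is even and −α is a quadratic residue modulo p. -/
/-!
If `pⁿ + αX² = a * b` with `a`, `b` non-units of `ℤ⟦X⟧`, then `p` divides both constant terms, and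
comparing the coefficients of `1`, `X`, `X²` gives `(a₀b₁)² = pⁿ t` with `t ≡ -α (mod p)`. Since
`p ∤ t`, the exponent `n` is even and `t` is a square.

Conversely, Hensel's lemma gives a unit `z ∈ ℤ_[p]` with `z² = -α`, so over `ℤ_[p]` the series
factors as `α (X - c)(X + c)` with `c = p^m / z`. Peeling off `c`-adic digits writes `X - c` times a
unit of `ℤ_[p]⟦X⟧` as a series `A` with integer coefficients and constant term `p^m`; the
cofactor then has integer coefficients as well, because `p^m ℤ_[p] ∩ ℤ = p^m ℤ`.
-/

open PowerSeries

section Prime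

variable {M : Type*} [CommMonoidWithZero M] [IsCancelMulZero M] {p : M}

theorem Prime.dvd_of_dvd_pow_of_not_isUnit_s15 (hp : Prime p) {a : M} {n : ℕ} (h : a ∣ p ^ n)
    (ha : ¬IsUnit a) : p ∣ a := by
  obtain ⟨i, -, hi⟩ := (dvd_prime_pow hp n).1 h
  rcases i with _ | i
  · exact absurd (hi.isUnit_iff.2 (by simp)) ha
  · exact (dvd_pow_self p i.succ_ne_zero).trans hi.symm.dvd

theorem Prime.eq_of_pow_mul_eq_pow_mul (hp : Prime p) {s t : M} (hs : ¬p ∣ s) (ht : ¬p ∣ t)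
    {a b : ℕ} (h : p ^ a * s = p ^ b * t) : a = b := by
  have key : ∀ {a b : ℕ} {s t : M}, ¬p ∣ s → p ^ a * s = p ^ b * t → ¬a < b := by
    intro a b s t hs h hab
    obtain ⟨k, rfl⟩ := Nat.exists_eq_add_of_lt hab
    rw [add_assoc, pow_add, mul_assoc] at h
    rw [mul_left_cancel₀ (pow_ne_zero a hp.ne_zero) h] at hs
    exact hs ((dvd_pow_self p k.succ_ne_zero).mul_right t)
  exact le_antisymm (not_lt.1 (key ht h.symm)) (not_lt.1 (key hs h))

theorem Prime.even_and_isSquare_of_sq_eq_pow_mul [WfDvdMonoid M] (hp : Prime p) {d t : M}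
    (ht : ¬p ∣ t) {n : ℕ} (h : d ^ 2 = p ^ n * t) : Even n ∧ IsSquare t := by
  have hd : d ≠ 0 := by
    rintro rfl
    rw [zero_pow two_ne_zero, eq_comm, mul_eq_zero] at h
    exact h.elim (pow_ne_zero n hp.ne_zero) (fun h0 => ht (h0 ▸ dvd_zero p))
  obtain ⟨k, s, hs, rfl⟩ := WfDvdMonoid.max_power_factor' hd hp.not_isUnit
  rw [mul_pow, ← pow_mul] at h
  obtain rfl := hp.eq_of_pow_mul_eq_pow_mul (fun h' => hs (hp.dvd_of_dvd_pow h')) ht h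
  exact ⟨⟨k, by ring⟩, s, by rw [← sq]; exact (mul_left_cancel₀ (pow_ne_zero _ hp.ne_zero) h).symm⟩

end Prime

theorem even_and_isSquare_of_eq_mul {p : ℕ} (hp : p.Prime) {n : ℕ} {α : ℤ} (hα : ¬(p : ℤ) ∣ α)
    {a b : ℤ⟦X⟧} (ha : ¬IsUnit a) (hb : ¬IsUnit b) (h : C ((p : ℤ) ^ n) + C α * X ^ 2 = a * b) :
    Even n ∧ IsSquare ((-α : ℤ) : ZMod p) := by
  have hp' : Prime (p : ℤ) := Nat.prime_iff_prime_int.mp hp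
  set a₀ := constantCoeff a
  set b₀ := constantCoeff b
  have hcoeff (k : ℕ) := congrArg (coeff k) h
  simp only [map_add, coeff_C, coeff_C_mul, coeff_X_pow] at hcoeff
  have h₀ : (p : ℤ) ^ n = a₀ * b₀ := by simpa [coeff_mul] using hcoeff 0
  have h₁ : 0 = a₀ * coeff 1 b + coeff 1 a * b₀ := by
    simpa [coeff_mul, Finset.Nat.sum_antidiagonal_succ] using hcoeff 1
  have h₂ : α = a₀ * coeff 2 b + coeff 1 a * coeff 1 b + coeff 2 a * b₀ := by
    simpa [coeff_mul, Finset.Nat.sum_antidiagonal_succ, add_assoc] using hcoeff 2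
  have hpa : (p : ℤ) ∣ a₀ :=
    hp'.dvd_of_dvd_pow_of_not_isUnit_s15 (Dvd.intro _ h₀.symm) (mt isUnit_iff_constantCoeff.mpr ha)
  have hpb : (p : ℤ) ∣ b₀ :=
    hp'.dvd_of_dvd_pow_of_not_isUnit_s15 (Dvd.intro_left _ h₀.symm) (mt isUnit_iff_constantCoeff.mpr hb)
  set t := a₀ * coeff 2 b + coeff 2 a * b₀ - α
  have hpt : (p : ℤ) ∣ t + α := by
    simpa [t] using dvd_add (hpa.mul_right (coeff 2 b)) (hpb.mul_left (coeff 2 a))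
  -- `(a₀b₁)² = -(a₀b₀)(a₁b₁)` by the `X`-coefficient, then expand `a₀b₀` and `a₁b₁`.
  have hsq : (a₀ * coeff 1 b) ^ 2 = (p : ℤ) ^ n * t := by
    linear_combination (coeff 1 a * coeff 1 b) * h₀ - (a₀ * coeff 1 b) * h₁ + (p : ℤ) ^ n * h₂
  obtain ⟨hn, ht⟩ := hp'.even_and_isSquare_of_sq_eq_pow_mul
    (fun ht => hα ((dvd_add_right ht).mp hpt)) hsq
  refine ⟨hn, ?_⟩
  have htα : ((-α : ℤ) : ZMod p) = ((t : ℤ) : ZMod p) :=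
    (ZMod.intCast_eq_intCast_iff_dvd_sub _ _ p).mpr (by simpa using hpt)
  exact htα ▸ ht.map (Int.castRingHom (ZMod p))

namespace PowerSeries

variable {R S : Type*} [CommRing R] [CommRing S] (φ : R →+* S)

theorem exists_map_eq_X_sub_C_mul {c : S} (hc : ∀ s, ∃ r y, s = φ r + c * y) {r₀ : R} {w : S}
    (h₀ : φ r₀ = -(c * w)) :
    ∃ A : R⟦X⟧, ∃ W : S⟦X⟧, constantCoeff A = r₀ ∧ constantCoeff W = w ∧
      map φ A = (X - C c) * W := by
  choose f g hfg using hc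
  -- `W` lists the successive quotients `w, g w, g (g w), …` of division by `c`.
  refine ⟨mk fun k => k.casesOn r₀ fun j => f (g^[j] w), mk fun k => g^[k] w, by simp, by simp, ?_⟩
  ext (_ | k)
  · simp [h₀]
  · simp only [coeff_map, coeff_mk, sub_mul, map_sub, coeff_succ_X_mul, coeff_C_mul,
      Function.iterate_succ_apply']
    exact eq_sub_of_add_eq (hfg _).symm

theorem exists_map_eq_of_map_mul_eq {A f : R⟦X⟧} {B : S⟦X⟧} (h : map φ A * B = map φ f)
    (hA : ∀ s r, φ (constantCoeff A) * s = φ r → ∃ r', s = φ r') :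
    ∃ b : R⟦X⟧, map φ b = B := by
  suffices ∀ k, ∃ r, coeff k B = φ r by
    choose b hb using this
    exact ⟨mk b, by ext k; simp [hb]⟩
  intro k
  induction k using Nat.strong_induction_on with
  | _ k ih =>
    choose! g hg using ih
    -- Only the `k`-th coefficient of `B` can differ from that of the lift `mk g`.
    obtain ⟨Q, hQ⟩ : X ^ k ∣ B - map φ (mk g) :=
      X_pow_dvd_iff.mpr fun j hj => by simp [hg j hj]
    have hk : coeff k (map φ A * (B - map φ (mk g))) = φ (constantCoeff A) * constantCoeff Q := by
      rw [hQ, mul_left_comm, coeff_X_pow_mul', if_pos le_rfl, Nat.sub_self,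
        coeff_zero_eq_constantCoeff_apply, map_mul]
      exact congrArg (· * _) (MvPowerSeries.constantCoeff_map φ A)
    rw [mul_sub, h, ← map_mul, ← map_sub, coeff_map] at hk
    obtain ⟨r, hr⟩ := hA _ _ hk.symm
    refine ⟨g k + r, ?_⟩
    have := congrArg (coeff k) hQ
    simp only [map_sub, coeff_map, coeff_mk, coeff_X_pow_mul', if_pos le_rfl, Nat.sub_self,
      coeff_zero_eq_constantCoeff] at this
    rw [map_add, ← hr]
    linear_combination this

end PowerSeries

namespace PadicInt

variable {p : ℕ} [Fact p.Prime]

theorem exists_intCast_add_pow_mul (m : ℕ) (x : ℤ_[p]) :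
    ∃ (r : ℤ) (y : ℤ_[p]), x = r + (p : ℤ_[p]) ^ m * y := by
  obtain ⟨y, hy⟩ := Ideal.mem_span_singleton'.mp (appr_spec m x)
  exact ⟨x.appr m, y, by push_cast; linear_combination -hy⟩

theorem exists_intCast_eq_of_pow_mul_eq_intCast {m : ℕ} {x : ℤ_[p]} {r : ℤ}
    (h : (p : ℤ_[p]) ^ m * x = r) : ∃ r' : ℤ, x = r' := by
  have hr : ‖(r : ℤ_[p])‖ ≤ (p : ℝ) ^ (-(m : ℤ)) := by
    rw [← h, norm_mul, norm_p_pow]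
    exact mul_le_of_le_one_right (by positivity) (norm_le_one x)
  obtain ⟨r', rfl⟩ := norm_int_le_pow_iff_dvd.mp hr
  have hp : (p : ℤ_[p]) ≠ 0 := Nat.cast_ne_zero.mpr (Fact.out : p.Prime).ne_zero
  refine ⟨r', mul_left_cancel₀ (pow_ne_zero m hp) ?_⟩
  rw [h]; push_cast; ring

theorem exists_isUnit_sq_eq_of_isSquare (hp : Odd p) {u : ℤ} (hu : ¬(p : ℤ) ∣ u)
    (hsq : IsSquare (u : ZMod p)) : ∃ z : ℤ_[p], IsUnit z ∧ z ^ 2 = u := by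
  have hp' : Prime (p : ℤ) := Nat.prime_iff_prime_int.mp Fact.out
  have norm_eq_one {k : ℤ} (hk : ¬(p : ℤ) ∣ k) : ‖(k : ℤ_[p])‖ = 1 :=
    norm_intCast_eq_one_iff.mpr (hp'.coprime_iff_not_dvd.mpr hk).symm
  obtain ⟨r, hr⟩ := hsq
  obtain ⟨s, rfl⟩ := ZMod.intCast_surjective r
  have hsu : (p : ℤ) ∣ s ^ 2 - u := by
    rw [← ZMod.intCast_zmod_eq_zero_iff_dvd]
    push_cast
    rw [hr, sq, sub_self]
  have hs : ¬(p : ℤ) ∣ s := fun h => hu ((dvd_sub_right (dvd_pow h two_ne_zero)).mp hsu)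
  have h2 : ¬(p : ℤ) ∣ 2 := fun h => by
    obtain rfl :=
      (Nat.prime_dvd_prime_iff_eq Fact.out Nat.prime_two).mp (Int.natCast_dvd_ofNat.mp h)
    exact absurd hp (by decide)
  let F : Polynomial ℤ := Polynomial.X ^ 2 - Polynomial.C u
  have hF : ‖F.aeval (s : ℤ_[p])‖ < ‖F.derivative.aeval (s : ℤ_[p])‖ ^ 2 := by
    have hFs : F.aeval (s : ℤ_[p]) = ((s ^ 2 - u : ℤ) : ℤ_[p]) := by simp [F]
    have hF's : F.derivative.aeval (s : ℤ_[p]) = ((2 * s : ℤ) : ℤ_[p]) := by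
      simp [F, map_ofNat]
    rw [hFs, hF's, norm_eq_one (hp'.not_dvd_mul h2 hs), one_pow, norm_intCast_lt_one_iff]
    exact hsu
  obtain ⟨z, hz, -⟩ := hensels_lemma hF
  have hz2 : z ^ 2 = u := by simpa [F, sub_eq_zero] using hz
  refine ⟨z, (isUnit_pow_iff two_ne_zero).mp ?_, hz2⟩
  rw [hz2, isUnit_iff]
  exact norm_eq_one hu

theorem exists_map_mul_eq_of_sq_eq {z : ℤ_[p]} (hz : IsUnit z)
    {α : ℤ} (hz2 : z ^ 2 = ((-α : ℤ) : ℤ_[p])) (m : ℕ) :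
    ∃ (A : ℤ⟦X⟧) (B : ℤ_[p]⟦X⟧), constantCoeff A = (p : ℤ) ^ m ∧
      map (Int.castRingHom ℤ_[p]) A * B =
        map (Int.castRingHom ℤ_[p]) (C ((p : ℤ) ^ (2 * m)) + C α * X ^ 2) := by
  obtain ⟨c, hcz⟩ : ∃ c, c * z = (p : ℤ_[p]) ^ m := ⟨_, hz.unit.inv_mul_cancel_right _⟩
  let φ := Int.castRingHom ℤ_[p]
  have hc : ∀ x : ℤ_[p], ∃ r y, x = φ r + c * y := fun x => by
    obtain ⟨r, y, rfl⟩ := exists_intCast_add_pow_mul m x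
    exact ⟨r, z * y, by simp [← hcz, mul_assoc]⟩
  obtain ⟨A, W, hA₀, hW₀, hAW⟩ := PowerSeries.exists_map_eq_X_sub_C_mul φ hc (r₀ := (p : ℤ) ^ m)
    (w := -z) (by simp [hcz])
  obtain ⟨V, hWV⟩ := (isUnit_iff_constantCoeff.mpr (hW₀ ▸ hz.neg)).exists_right_inv
  have hαc : (α : ℤ_[p]) * c ^ 2 = -(p : ℤ_[p]) ^ (2 * m) := by
    push_cast at hz2
    linear_combination c ^ 2 * hz2 - (c * z + (p : ℤ_[p]) ^ m) * hcz
  refine ⟨A, C (α : ℤ_[p]) * (X + C c) * V, hA₀, ?_⟩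
  calc map φ A * (C (α : ℤ_[p]) * (X + C c) * V)
      = (C (α : ℤ_[p]) * X ^ 2 - C (α * c ^ 2)) * (W * V) := by
        rw [hAW, map_mul, map_pow]; ring
    _ = _ := by simp [hαc, hWV, add_comm]

end PadicInt

theorem exists_eq_mul_of_isSquare {p : ℕ} [Fact p.Prime] (hp : Odd p) {m : ℕ} (hm : m ≠ 0)
    {α : ℤ} (hα : ¬(p : ℤ) ∣ α) (hsq : IsSquare ((-α : ℤ) : ZMod p)) :
    ∃ a b : ℤ⟦X⟧, ¬IsUnit a ∧ ¬IsUnit b ∧ C ((p : ℤ) ^ (2 * m)) + C α * X ^ 2 = a * b := by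
  have hp' : Prime (p : ℤ) := Nat.prime_iff_prime_int.mp Fact.out
  obtain ⟨z, hz, hz2⟩ := PadicInt.exists_isUnit_sq_eq_of_isSquare hp (by simpa using hα) hsq
  obtain ⟨A, B, hA₀, hAB⟩ := PadicInt.exists_map_mul_eq_of_sq_eq hz hz2 m
  obtain ⟨b, hb⟩ := PowerSeries.exists_map_eq_of_map_mul_eq _ hAB fun x r h =>
    PadicInt.exists_intCast_eq_of_pow_mul_eq_intCast (by simpa [hA₀] using h)
  have hf : C ((p : ℤ) ^ (2 * m)) + C α * X ^ 2 = A * b :=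
    map_injective (Int.castRingHom ℤ_[p]) Int.cast_injective
      (by rw [map_mul, hb, hAB])
  have hb₀ : constantCoeff b = (p : ℤ) ^ m := by
    have h : (p : ℤ) ^ m * (p : ℤ) ^ m = (p : ℤ) ^ m * constantCoeff b := by
      simpa [hA₀, ← pow_add, two_mul] using congrArg constantCoeff hf
    exact (mul_left_cancel₀ (pow_ne_zero m hp'.ne_zero) h).symm
  have hpm : ¬IsUnit ((p : ℤ) ^ m) := fun h => hp'.not_isUnit ((isUnit_pow_iff hm).mp h)
  exact ⟨A, b, mt (isUnit_constantCoeff A) (hA₀ ▸ hpm), mt (isUnit_constantCoeff b) (hb₀ ▸ hpm), hf⟩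

theorem stmt_15 (p : ℕ) (hp : p.Prime) (hodd : Odd p) (n : ℕ) (hn : 1 ≤ n) (α : ℤ)
    (hα : Int.gcd (p : ℤ) α = 1) :
    (∃ a b : PowerSeries ℤ, ¬ IsUnit a ∧ ¬ IsUnit b ∧
      (PowerSeries.C : ℤ →+* PowerSeries ℤ) ((p : ℤ) ^ n) + (PowerSeries.C : ℤ →+* PowerSeries ℤ) α * PowerSeries.X ^ 2 = a * b) ↔
    Even n ∧ IsSquare ((-α : ℤ) : ZMod p) := by
  have hpα : ¬(p : ℤ) ∣ α := (Nat.prime_iff_prime_int.mp hp).coprime_iff_not_dvd.mp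
    (Int.isCoprime_iff_gcd_eq_one.mpr hα)
  constructor
  · rintro ⟨a, b, ha, hb, h⟩
    exact even_and_isSquare_of_eq_mul hp hpα ha hb h
  · rintro ⟨⟨m, rfl⟩, hsq⟩
    have : Fact p.Prime := ⟨hp⟩
    rw [← two_mul]
    exact exists_eq_mul_of_isSquare hodd (by omega) hpα hsq
end

section
/- Let α, β be odd integers and n, m ≥ 1. The polynomial f(x) = 2ⁿ + 2ᵐβx + αx² is reducible in ℤ[[x]] if and only if it is reducible as a polynomial in ℤ₂[x]. -/
/-!
Over `ℤ₂` the quadratic is `α` times the distinguished polynomial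
`P = X² + α⁻¹2ᵐβ X + α⁻¹2ⁿ`, since `α` is a unit and `n, m ≥ 1`.

If `f = a * b` in `ℤ⟦X⟧` with non-units `a, b`, then `a(0) * b(0) = 2ⁿ` makes both constant
terms even, so `a` and `b` remain non-units in `ℤ₂⟦X⟧`. By uniqueness in the Weierstrass
preparation theorem, `P` is the product of the distinguished polynomials of `a` and `b`, and
neither of these is a unit.

Conversely, a factorisation over `ℤ₂` gives a root `r` of `P`, and `r ∈ 2ℤ₂` because
`P ≡ X² mod 2`; write `r = u 2ʲ`. Since `ℤ` is dense in `ℤ₂`, there is an integer power series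
`A` with `A(0) = 2ʲ` that equals `X - r` times a unit of `ℤ₂⟦X⟧`. Then `f = A * B` in
`ℤ₂⟦X⟧`, and `B` has integer coefficients: inductively `2ʲ B_k ∈ ℤ`, and `2ʲ x ∈ ℤ` forces
`x ∈ ℤ` for `x ∈ ℤ₂`.
-/

open Polynomial IsLocalRing
open scoped PowerSeries

theorem Polynomial.natDegree_X_sq_add {R : Type*} [CommRing R] [Nontrivial R] (c₀ c₁ : R) :
    (X ^ 2 + C c₁ * X + C c₀).natDegree = 2 := by
  simpa using natDegree_quadratic (R := R) one_ne_zero (b := c₁) (c := c₀)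

theorem Polynomial.isDistinguishedAt_X_sq_add {R : Type*} [CommRing R] [Nontrivial R]
    {I : Ideal R} {c₀ c₁ : R} (h₀ : c₀ ∈ I) (h₁ : c₁ ∈ I) :
    (X ^ 2 + C c₁ * X + C c₀).IsDistinguishedAt I := by
  refine ⟨⟨fun {k} hk ↦ ?_⟩, ?_⟩
  · rw [natDegree_X_sq_add] at hk
    interval_cases k <;> simpa [coeff_X]
  · rw [Monic, leadingCoeff, natDegree_X_sq_add]
    simp

theorem Polynomial.C_mul_X_sq_add {R : Type*} [CommRing R] (u : Rˣ) (c₀ c₁ : R) :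
    C c₀ + C c₁ * X + C (u : R) * X ^ 2 =
      C (u : R) * (X ^ 2 + C (↑u⁻¹ * c₁) * X + C (↑u⁻¹ * c₀)) := by
  have h : C (u : R) * C (↑u⁻¹ : R) = 1 := by rw [← C_mul, u.mul_inv, C_1]
  simp only [C_mul]
  linear_combination (-(C c₀ + C c₁ * X)) * h

theorem Polynomial.Monic.exists_isRoot_of_not_irreducible {R : Type*} [CommRing R] [IsDomain R]
    {P : R[X]} (hP : P.Monic) (h2 : P.natDegree = 2) (h : ¬Irreducible P) : ∃ r, P.IsRoot r := by
  rw [hP.irreducible_iff_roots_eq_zero_of_degree_le_three h2.ge (by omega),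
    Multiset.eq_zero_iff_forall_notMem] at h
  push Not at h
  obtain ⟨r, hr⟩ := h
  exact ⟨r, (mem_roots hP.ne_zero).mp hr⟩

namespace Polynomial.IsDistinguishedAt

theorem mem_of_isRoot {R : Type*} [CommRing R] {I : Ideal R} [I.IsPrime] {P : R[X]}
    (hP : P.IsDistinguishedAt I) {r : R} (hr : P.IsRoot r) : r ∈ I := by
  have h := congrArg (eval (Ideal.Quotient.mk I r)) hP.map_eq_X_pow
  rw [eval_map_apply, hr.eq_zero, map_zero, eval_pow, eval_X, eq_comm] at h
  exact Ideal.Quotient.eq_zero_iff_mem.mp (eq_zero_of_pow_eq_zero h)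

theorem coeff_zero_divByMonic_mem {R : Type*} [CommRing R] {I : Ideal R} {P : R[X]}
    (hP : P.IsDistinguishedAt I) (h2 : 1 < P.natDegree) {r : R} (hr : P.IsRoot r)
    (hrI : r ∈ I) : (P /ₘ (X - C r)).coeff 0 ∈ I := by
  have h := congrArg (coeff · 1) (mul_divByMonic_eq_iff_isRoot.mpr hr)
  rw [show 1 = 0 + 1 from rfl, coeff_X_sub_C_mul, sub_eq_iff_eq_add] at h
  rw [h]
  exact I.add_mem (hP.mem h2) (I.mul_mem_right _ hrI)

theorem exists_eq_mul_of_coe_eq_mul {A : Type*} [CommRing A] [IsLocalRing A]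
    [IsAdicComplete (maximalIdeal A) A] {P : A[X]} (hP : P.IsDistinguishedAt (maximalIdeal A))
    {a b : A⟦X⟧} (ha : ¬IsUnit a) (hb : ¬IsUnit b) (hab : (P : A⟦X⟧) = a * b) :
    ∃ p q : A[X], ¬IsUnit p ∧ ¬IsUnit q ∧ P = p * q := by
  have HP : (a * b).IsWeierstrassFactorization P 1 := ⟨hP, isUnit_one, by rw [hab, mul_one]⟩
  obtain ⟨p, u, Ha⟩ := a.exists_isWeierstrassFactorization fun h ↦ HP.map_ne_zero (by simp [h])
  obtain ⟨q, v, Hb⟩ := b.exists_isWeierstrassFactorization fun h ↦ HP.map_ne_zero (by simp [h])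
  refine ⟨p, q, fun hp ↦ ha ?_, fun hq ↦ hb ?_,
    (PowerSeries.IsWeierstrassFactorization.elim (Ha.mul Hb) HP).1.symm⟩
  · rw [Ha.eq_mul]; exact (hp.map (coeToPowerSeries.ringHom (R := A))).mul Ha.isUnit
  · rw [Hb.eq_mul]; exact (hq.map (coeToPowerSeries.ringHom (R := A))).mul Hb.isUnit

end Polynomial.IsDistinguishedAt

theorem PowerSeries.coeff_mem_of_coeff_mul_mem_s19 {R : Type*} [CommRing R] (S : Subring R)
    {a b : R⟦X⟧} (ha : ∀ k, coeff k a ∈ S) (hab : ∀ k, coeff k (a * b) ∈ S)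
    (hcancel : ∀ x, constantCoeff a * x ∈ S → x ∈ S) (k : ℕ) : coeff k b ∈ S := by
  induction k using Nat.strong_induction_on with
  | _ k ih =>
    have h := hab k
    rw [coeff_mul, Finset.Nat.sum_antidiagonal_eq_sum_range_succ (fun i l ↦ coeff i a * coeff l b),
      Finset.sum_range_succ', Nat.sub_zero, coeff_zero_eq_constantCoeff_apply] at h
    refine hcancel _ ((add_mem_cancel_left (S.sum_mem fun i hi ↦ S.mul_mem (ha _) (ih _ ?_))).mp h)
    have := Finset.mem_range.mp hi
    omega

namespace PadicInt

variable {p : ℕ} [Fact p.Prime]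

theorem mem_range_intCast_of_pow_mul_mem {j : ℕ} {x : ℤ_[p]}
    (hx : (p : ℤ_[p]) ^ j * x ∈ (Int.castRingHom ℤ_[p]).range) :
    x ∈ (Int.castRingHom ℤ_[p]).range := by
  obtain ⟨z, hz⟩ := hx
  obtain ⟨w, rfl⟩ := (pow_p_dvd_int_iff j z).mp ⟨x, hz⟩
  refine ⟨w, mul_left_cancel₀ (pow_ne_zero j (NeZero.ne (p : ℤ_[p]))) ?_⟩
  rw [← hz, map_mul, map_pow, map_natCast]

theorem not_isUnit_map_of_constantCoeff_mul_eq {a b : ℤ⟦X⟧} {n : ℕ}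
    (h : PowerSeries.constantCoeff (a * b) = (p : ℤ) ^ n) (ha : ¬IsUnit a) :
    ¬IsUnit (a.map (Int.castRingHom ℤ_[p])) := by
  rw [PowerSeries.isUnit_iff_constantCoeff] at ha ⊢
  rw [← PowerSeries.coeff_zero_eq_constantCoeff_apply, PowerSeries.coeff_map,
    PowerSeries.coeff_zero_eq_constantCoeff_apply, eq_intCast, isUnit_iff,
    norm_intCast_eq_one_iff]
  refine fun hco ↦ ha ((hco.pow_right (n := n)).isUnit_of_dvd' dvd_rfl
    ⟨PowerSeries.constantCoeff b, ?_⟩)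
  rw [← h, map_mul]

theorem exists_map_eq_X_sub_C_mul (u : ℤ_[p]ˣ) (j : ℕ) :
    ∃ A : ℤ⟦X⟧, PowerSeries.constantCoeff A = (p : ℤ) ^ j ∧ ∃ V : ℤ_[p]⟦X⟧, IsUnit V ∧
      A.map (Int.castRingHom ℤ_[p]) =
        (PowerSeries.X - PowerSeries.C (↑u * (p : ℤ_[p]) ^ j)) * V := by
  have happr (w : ℤ_[p]) : ∃ z : ℤ, (p : ℤ_[p]) ^ j ∣ w - z :=
    ⟨appr w j, by exact_mod_cast Ideal.mem_span_singleton.mp (appr_spec j w)⟩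
  choose z t ht using happr
  -- `V` is the quotient `A / (X - u * p ^ j)`; each integer coefficient `z (V k)` of `A` is chosen
  -- so that the next coefficient of the quotient stays in `ℤ_[p]`.
  obtain ⟨V, hV₀, hV⟩ : ∃ V : ℕ → ℤ_[p], V 0 = -↑u⁻¹ ∧ ∀ k, V (k + 1) = ↑u⁻¹ * t (V k) :=
    ⟨fun k ↦ Nat.rec (-↑u⁻¹) (fun _ v ↦ ↑u⁻¹ * t v) k, rfl, fun _ ↦ rfl⟩
  obtain ⟨a, ha₀, ha⟩ : ∃ a : ℕ → ℤ, a 0 = (p : ℤ) ^ j ∧ ∀ k, a (k + 1) = z (V k) :=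
    ⟨fun k ↦ Nat.casesOn k ((p : ℤ) ^ j) fun k ↦ z (V k), rfl, fun _ ↦ rfl⟩
  refine ⟨PowerSeries.mk a, ha₀, PowerSeries.mk V, ?_, ?_⟩
  · rw [PowerSeries.isUnit_iff_constantCoeff, ← PowerSeries.coeff_zero_eq_constantCoeff_apply,
      PowerSeries.coeff_mk, hV₀]
    exact (Units.isUnit _).neg
  · ext (_ | k) <;>
      simp only [PowerSeries.coeff_map, PowerSeries.coeff_mk, eq_intCast, sub_mul, map_sub,
        PowerSeries.coeff_C_mul]
    · rw [PowerSeries.coeff_zero_X_mul, hV₀, ha₀]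
      push_cast
      linear_combination (-(p : ℤ_[p]) ^ j) * u.mul_inv
    · rw [PowerSeries.coeff_succ_X_mul, PowerSeries.coeff_mk, hV, ha]
      linear_combination -ht (V k) + (p : ℤ_[p]) ^ j * t (V k) * u.mul_inv

theorem exists_mul_eq_of_map_eq_X_sub_C_mul {f : ℤ⟦X⟧} {r : ℤ_[p]} {g : ℤ_[p]⟦X⟧}
    (hr₀ : r ≠ 0) (hr : r ∈ maximalIdeal ℤ_[p]) (hg : ¬IsUnit g)
    (hf : f.map (Int.castRingHom ℤ_[p]) = (PowerSeries.X - PowerSeries.C r) * g) :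
    ∃ a b : ℤ⟦X⟧, ¬IsUnit a ∧ ¬IsUnit b ∧ f = a * b := by
  obtain ⟨A, hA₀, _, ⟨V, rfl⟩, hAV⟩ := exists_map_eq_X_sub_C_mul (unitCoeff hr₀) r.valuation
  rw [← unitCoeff_spec hr₀] at hAV
  set φ := Int.castRingHom ℤ_[p]
  have hAB : A.map φ * (↑V⁻¹ * g) = f.map φ := by
    rw [hAV, hf, mul_assoc, V.mul_inv_cancel_left]
  have hint (c : ℤ⟦X⟧) (k : ℕ) : PowerSeries.coeff k (c.map φ) ∈ φ.range :=
    ⟨_, (PowerSeries.coeff_map φ k c).symm⟩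
  have hB := PowerSeries.coeff_mem_of_coeff_mul_mem_s19 φ.range (hint A) (hAB ▸ hint f) fun x hx ↦
    mem_range_intCast_of_pow_mul_mem (j := r.valuation) (by
      rwa [← PowerSeries.coeff_zero_eq_constantCoeff_apply, PowerSeries.coeff_map,
        PowerSeries.coeff_zero_eq_constantCoeff_apply, hA₀, map_pow, map_natCast] at hx)
  choose b hb using hB
  have hBb : (PowerSeries.mk b).map φ = ↑V⁻¹ * g := by
    ext k
    rw [PowerSeries.coeff_map, PowerSeries.coeff_mk, hb]
  refine ⟨A, PowerSeries.mk b, fun hA ↦ ?_, fun hB ↦ hg ?_,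
    PowerSeries.map_injective φ Int.cast_injective (by rw [map_mul, hBb, hAB])⟩
  · have := isUnit_of_mul_isUnit_left (hAV ▸ hA.map (PowerSeries.map φ))
    rw [PowerSeries.isUnit_iff_constantCoeff] at this
    simp only [map_sub, PowerSeries.constantCoeff_X, PowerSeries.constantCoeff_C, zero_sub,
      IsUnit.neg_iff] at this
    exact (mem_maximalIdeal r).mp hr this
  · exact isUnit_of_mul_isUnit_right (hBb ▸ hB.map (PowerSeries.map φ))

theorem exists_C_mul_eq_mul_of_eq_mul {f a b : ℤ⟦X⟧} {n : ℕ}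
    (hf₀ : PowerSeries.constantCoeff f = (p : ℤ) ^ n) {u : ℤ_[p]ˣ} {P : ℤ_[p][X]}
    (hP : P.IsDistinguishedAt (maximalIdeal ℤ_[p]))
    (hf : f.map (Int.castRingHom ℤ_[p]) = ↑(C (u : ℤ_[p]) * P))
    (ha : ¬IsUnit a) (hb : ¬IsUnit b) (hab : f = a * b) :
    ∃ q₁ q₂ : ℤ_[p][X], ¬IsUnit q₁ ∧ ¬IsUnit q₂ ∧ C (u : ℤ_[p]) * P = q₁ * q₂ := by
  have hab₀ : PowerSeries.constantCoeff (a * b) = (p : ℤ) ^ n := hab ▸ hf₀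
  have hba₀ : PowerSeries.constantCoeff (b * a) = (p : ℤ) ^ n := mul_comm a b ▸ hab₀
  obtain ⟨q₁, q₂, h₁, h₂, hq⟩ := hP.exists_eq_mul_of_coe_eq_mul
    (a := PowerSeries.C (↑u⁻¹ : ℤ_[p]) * a.map (Int.castRingHom ℤ_[p]))
    (b := b.map (Int.castRingHom ℤ_[p]))
    (fun h ↦ not_isUnit_map_of_constantCoeff_mul_eq hab₀ ha (isUnit_of_mul_isUnit_right h))
    (not_isUnit_map_of_constantCoeff_mul_eq hba₀ hb) (by
      rw [mul_assoc, ← map_mul, ← hab, hf, Polynomial.coe_mul, Polynomial.coe_C, ← mul_assoc,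
        ← map_mul, u.inv_mul, map_one, one_mul])
  exact ⟨C (u : ℤ_[p]) * q₁, q₂, fun h ↦ h₁ (isUnit_of_mul_isUnit_right h), h₂,
    by rw [hq, mul_assoc]⟩

theorem exists_eq_mul_of_C_mul_eq_mul {f : ℤ⟦X⟧} {u : ℤ_[p]ˣ} {P : ℤ_[p][X]}
    (hP : P.IsDistinguishedAt (maximalIdeal ℤ_[p])) (h2 : P.natDegree = 2) (hP₀ : P.coeff 0 ≠ 0)
    (hf : f.map (Int.castRingHom ℤ_[p]) = ↑(C (u : ℤ_[p]) * P)) {a b : ℤ_[p][X]}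
    (ha : ¬IsUnit a) (hb : ¬IsUnit b) (hab : C (u : ℤ_[p]) * P = a * b) :
    ∃ a b : ℤ⟦X⟧, ¬IsUnit a ∧ ¬IsUnit b ∧ f = a * b := by
  have hirr : ¬Irreducible P := fun hirr ↦
    ((((irreducible_isUnit_mul (isUnit_C.mpr u.isUnit)).mpr hirr).isUnit_or_isUnit hab).elim ha hb)
  obtain ⟨r, hr⟩ := hP.monic.exists_isRoot_of_not_irreducible h2 hirr
  have hrI := hP.mem_of_isRoot hr
  have hr₀ : r ≠ 0 := by
    rintro rfl
    exact hP₀ (coeff_zero_eq_eval_zero P ▸ hr)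
  have hG := hP.coeff_zero_divByMonic_mem (by omega) hr hrI
  refine exists_mul_eq_of_map_eq_X_sub_C_mul
    (g := PowerSeries.C (u : ℤ_[p]) * ((P /ₘ (X - C r) : ℤ_[p][X]) : ℤ_[p]⟦X⟧))
    hr₀ hrI (fun h ↦ ?_) ?_
  · have := isUnit_of_mul_isUnit_right h
    rw [PowerSeries.isUnit_iff_constantCoeff, ← PowerSeries.coeff_zero_eq_constantCoeff_apply,
      Polynomial.coeff_coe] at this
    exact (mem_maximalIdeal _).mp hG this
  · conv_lhs => rw [hf, ← mul_divByMonic_eq_iff_isRoot.mpr hr]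
    push_cast
    ring

end PadicInt

theorem stmt_19_general (α β : ℤ) (hα : Odd α) (n m : ℕ)
    (hn : 1 ≤ n) (hm : 1 ≤ m) :
    (∃ a b : PowerSeries ℤ, ¬ IsUnit a ∧ ¬ IsUnit b ∧
      (@PowerSeries.C ℤ _) ((2 : ℤ) ^ n) +
        (@PowerSeries.C ℤ _) ((2 : ℤ) ^ m * β) * PowerSeries.X +
        (@PowerSeries.C ℤ _) α * PowerSeries.X ^ 2 = a * b) ↔
    (∃ a b : Polynomial ℤ_[2], ¬ IsUnit a ∧ ¬ IsUnit b ∧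
      Polynomial.C ((2 : ℤ_[2]) ^ n) +
        Polynomial.C ((2 : ℤ_[2]) ^ m * (β : ℤ_[2])) * Polynomial.X +
        Polynomial.C (α : ℤ_[2]) * Polynomial.X ^ 2 = a * b) := by
  obtain ⟨u, hu⟩ : IsUnit (α : ℤ_[2]) := by
    rw [PadicInt.isUnit_iff, PadicInt.norm_intCast_eq_one_iff]
    obtain ⟨k, rfl⟩ := hα
    exact ⟨1, -k, by push_cast; ring⟩
  set P : ℤ_[2][X] :=
    X ^ 2 + C ((↑u⁻¹ : ℤ_[2]) * (2 ^ m * β)) * X + C ((↑u⁻¹ : ℤ_[2]) * 2 ^ n)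
  have hFP := C_mul_X_sq_add u (2 ^ n) (2 ^ m * (β : ℤ_[2]))
  have h2 : (2 : ℤ_[2]) ∈ maximalIdeal ℤ_[2] := by simpa using PadicInt.p_nonunit (p := 2)
  have hP : P.IsDistinguishedAt (maximalIdeal ℤ_[2]) :=
    isDistinguishedAt_X_sq_add (Ideal.mul_mem_left _ _ (Ideal.pow_mem_of_mem _ h2 n hn))
      (Ideal.mul_mem_left _ _ (Ideal.mul_mem_right _ _ (Ideal.pow_mem_of_mem _ h2 m hm)))
  have hf : (PowerSeries.C (2 ^ n) + PowerSeries.C (2 ^ m * β) * PowerSeries.X +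
      PowerSeries.C α * PowerSeries.X ^ 2 : ℤ⟦X⟧).map (Int.castRingHom ℤ_[2]) =
      ↑(C (u : ℤ_[2]) * P) := by
    rw [← hFP, hu]
    simp only [eq_intCast, map_add, map_pow, map_ofNat, map_mul, map_intCast, PowerSeries.map_X,
      ← coeToPowerSeries.ringHom_apply]
    simp only [coeToPowerSeries.ringHom_apply, coe_X]
  rw [← hu, hFP]
  have hP₀ : P.coeff 0 ≠ 0 := by simp [P, coeff_zero_eq_eval_zero]
  refine ⟨fun ⟨a, b, ha, hb, hab⟩ ↦ ?_, fun ⟨a, b, ha, hb, hab⟩ ↦ ?_⟩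
  · exact PadicInt.exists_C_mul_eq_mul_of_eq_mul (n := n) (by simp [map_ofNat]) hP hf ha hb hab
  · exact PadicInt.exists_eq_mul_of_C_mul_eq_mul hP (natDegree_X_sq_add _ _) hP₀ hf ha hb hab

theorem stmt_19 (α β : ℤ) (hα : Odd α) (hβ : Odd β) (n m : ℕ)
    (hn : 1 ≤ n) (hm : 1 ≤ m) :
    (∃ a b : PowerSeries ℤ, ¬ IsUnit a ∧ ¬ IsUnit b ∧
      (@PowerSeries.C ℤ _) ((2 : ℤ) ^ n) +
        (@PowerSeries.C ℤ _) ((2 : ℤ) ^ m * β) * PowerSeries.X +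
        (@PowerSeries.C ℤ _) α * PowerSeries.X ^ 2 = a * b) ↔
    (∃ a b : Polynomial ℤ_[2], ¬ IsUnit a ∧ ¬ IsUnit b ∧
      Polynomial.C ((2 : ℤ_[2]) ^ n) +
        Polynomial.C ((2 : ℤ_[2]) ^ m * (β : ℤ_[2])) * Polynomial.X +
        Polynomial.C (α : ℤ_[2]) * Polynomial.X ^ 2 = a * b) :=
  stmt_19_general α β hα n m hn hm
end
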